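/- arXiv:1210.7944 — 5 statements merged into one kernel-verified Lean document; each statement's English description precedes it below -/
import Mathlib

section
/- Let G be a loopless graph and let α_w x^w be a nonzero term in the standard expansion of the edge monomial ε(G). Then G is (w + 1)-edge choosable. -/
namespace FLL

variable {V E : Type}

/-- The flags of a multigraph: incident (vertex, edge) pairs. -/
def Flag (ends : E → Sym2 V) : Type := {p : V × E // p.1 ∈ ends p.2}

instance (ends : E → Sym2 V) [Fintype V] [Fintype E] [DecidableEq V] :
    Fintype (Flag ends) := Subtype.fintype _

/-- Degree of a vertex: number of incident edges. -/
def deg [Fintype E] [DecidableEq V] (ends : E → Sym2 V) (v : V) : ℕ :=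
  (Finset.univ.filter fun e => v ∈ ends e).card

/-- A multigraph is loopless if no edge joins a vertex to itself. -/
def Loopless (ends : E → Sym2 V) : Prop := ∀ e, ¬ (ends e).IsDiag

/-- A proper edge colouring: edges sharing an endpoint receive distinct colours. -/
def ProperEdgeColoring (ends : E → Sym2 V) (c : E → ℕ) : Prop :=
  ∀ e e', e ≠ e' → (∃ v, v ∈ ends e ∧ v ∈ ends e') → c e ≠ c e'

/-- `G` is `f`-edge choosable. -/
def EdgeChoosable (ends : E → Sym2 V) (f : E → ℕ) : Prop :=
  ∀ L : E → Finset ℕ, (∀ e, f e ≤ (L e).card) →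
    ∃ c : E → ℕ, ProperEdgeColoring ends c ∧ ∀ e, c e ∈ L e

variable [Fintype V] [DecidableEq V] [Fintype E] [DecidableEq E]

/-- The edge monomial `ε(G) = ∏_{i<j} (x_i - x_j)^{c(i,j)}`, relative to the fixed
linear ordering of the edges; `c(i,j)` is the number of common endpoints of `e_i, e_j`. -/
noncomputable def edgeMonomial [LinearOrder E] (ends : E → Sym2 V) : MvPolynomial E ℝ :=
  ∏ p ∈ Finset.univ.filter (fun p : E × E => p.1 < p.2),
    (MvPolynomial.X p.1 - MvPolynomial.X p.2) ^
      (Finset.univ.filter fun v => v ∈ ends p.1 ∧ v ∈ ends p.2).card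

/-- A star labelling of `G`: at each vertex `v`, the labels of the flags at `v`
form a bijection onto `{0, 1, …, deg v - 1}`. -/
def IsStarLabelling (ends : E → Sym2 V) (π : Flag ends → ℕ) : Prop :=
  ∀ v : V, (Finset.univ.filter (fun fl : Flag ends => fl.1.1 = v)).image π
      = Finset.range (deg ends v)

/-- The exponent of a star labelling: `w_π(e) = π_u(e) + π_v(e)` for `e = uv`
(the sum of the labels of the two flags of `e`). -/
def exponent (ends : E → Sym2 V) (π : Flag ends → ℕ) : E → ℕ :=
  fun e => ∑ fl ∈ Finset.univ.filter (fun fl : Flag ends => fl.1.2 = e), π fl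

/-- The sign of a star labelling, relative to a fixed linear ordering of the edges:
`sgn π = ∏_v sgn(π_v)`, where `sgn(π_v)` is the sign of the permutation of
`{0,…,d-1}` given by the labels at `v` read in increasing edge order; equivalently
(as formalized here) it is the product, over all pairs of flags at a common vertex
taken in increasing edge order, of the sign of the difference of their labels. -/
def starSign [LinearOrder E] (ends : E → Sym2 V) (π : Flag ends → ℕ) : ℤ :=
  ∏ p ∈ Finset.univ.filter
      (fun p : Flag ends × Flag ends => p.1.1.1 = p.2.1.1 ∧ p.1.1.2 < p.2.1.2),
    Int.sign ((π p.2 : ℤ) - (π p.1 : ℤ))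

end FLL

section CNaux
open Polynomial Finset
variable {F : Type*} [Field F] [DecidableEq F]

lemma coeff_basis_top (S : Finset F) (x : F) (hx : x ∈ S) :
    (Lagrange.basis S id x).coeff (S.card - 1) = Lagrange.nodalWeight S id x := by
  have hb : Lagrange.basis S id x
      = C (Lagrange.nodalWeight S id x) * Lagrange.nodal (S.erase x) id := by
    rw [Lagrange.basis_eq_prod_sub_inv_mul_nodal_div hx,
      ← Lagrange.nodal_erase_eq_nodal_div hx]
  rw [hb, coeff_C_mul]
  have h1 : (Lagrange.nodal (S.erase x) id).natDegree = S.card - 1 := by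
    rw [Lagrange.natDegree_nodal, card_erase_of_mem hx]
  have := Lagrange.nodal_monic (s := S.erase x) (v := (id : F → F))
  rw [← h1, Monic.coeff_natDegree this, mul_one]

lemma sum_pow_mul_nodalWeight (S : Finset F) (m : ℕ) (hm : m + 1 ≤ S.card) :
    ∑ x ∈ S, x ^ m * Lagrange.nodalWeight S id x
      = if m = S.card - 1 then 1 else 0 := by
  have hinj : Set.InjOn (id : F → F) S := Function.injective_id.injOn
  have hdeg : (X ^ m : F[X]).degree < S.card := by
    rw [degree_X_pow]
    exact_mod_cast Nat.lt_of_succ_le hm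
  have h := Lagrange.eq_interpolate (f := (X ^ m : F[X])) hinj hdeg
  have h2 := congrArg (fun p => Polynomial.coeff p (S.card - 1)) h
  simp only [Lagrange.interpolate_apply, finset_sum_coeff, coeff_C_mul, coeff_X_pow] at h2
  rw [if_congr eq_comm rfl rfl] at h2
  rw [h2]
  apply Finset.sum_congr rfl
  intro x hxS
  rw [coeff_basis_top S x hxS]
  simp

open MvPolynomial in
lemma coeff_grid {σ : Type*} [Fintype σ] [DecidableEq σ]
    (t : σ → ℕ) (S : σ → Finset F) (hc : ∀ i, (S i).card = t i + 1)
    (P : MvPolynomial σ F) (hdeg : P.totalDegree ≤ ∑ i, t i) :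
    P.coeff (Finsupp.equivFunOnFinite.symm t)
      = ∑ s ∈ Fintype.piFinset S, MvPolynomial.eval s P
          * ∏ i, Lagrange.nodalWeight (S i) id (s i) := by
  have key : ∀ s : σ → F, ∀ d : σ →₀ ℕ,
      (P.coeff d * ∏ i, s i ^ d i) * ∏ i, Lagrange.nodalWeight (S i) id (s i)
      = P.coeff d * ∏ i, (s i ^ d i * Lagrange.nodalWeight (S i) id (s i)) := by
    intro s d
    rw [mul_assoc, ← Finset.prod_mul_distrib]
  simp_rw [MvPolynomial.eval_eq', Finset.sum_mul, key]
  rw [Finset.sum_comm]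
  simp_rw [← Finset.mul_sum]
  have swap : ∀ d : σ →₀ ℕ,
      (∑ s ∈ Fintype.piFinset S, ∏ i, (s i ^ d i * Lagrange.nodalWeight (S i) id (s i)))
      = ∏ i, ∑ x ∈ S i, (x ^ d i * Lagrange.nodalWeight (S i) id x) := fun d =>
    (Finset.prod_univ_sum S (fun i x => x ^ d i * Lagrange.nodalWeight (S i) id x)).symm
  simp_rw [swap]
  have step : ∀ d ∈ P.support,
      P.coeff d * ∏ i, (∑ x ∈ S i, x ^ d i * Lagrange.nodalWeight (S i) id x)
      = if d = Finsupp.equivFunOnFinite.symm t then P.coeff d else 0 := by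
    intro d hd
    by_cases h : d = Finsupp.equivFunOnFinite.symm t
    · subst h
      rw [if_pos rfl]
      have : ∀ i, (∑ x ∈ S i, x ^ (Finsupp.equivFunOnFinite.symm t) i
          * Lagrange.nodalWeight (S i) id x) = 1 := by
        intro i
        have hi : (Finsupp.equivFunOnFinite.symm t) i = t i := rfl
        rw [hi, sum_pow_mul_nodalWeight _ _ (le_of_eq (hc i).symm), if_pos]
        rw [hc i]
        omega
      rw [Finset.prod_congr rfl (fun i _ => this i), Finset.prod_const_one, mul_one]
    · rw [if_neg h]
      have hsum : (∑ i, d i) ≤ ∑ i, t i := by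
        refine le_trans ?_ hdeg
        have := MvPolynomial.le_totalDegree hd
        rwa [Finsupp.sum_fintype _ _ (fun _ => rfl)] at this
      have hj : ∃ j, d j < t j := by
        by_contra hno
        push_neg at hno
        have heq : ∑ i, t i = ∑ i, d i :=
          le_antisymm (Finset.sum_le_sum fun i _ => hno i) hsum
        have := (Finset.sum_eq_sum_iff_of_le (fun i _ => hno i)).mp heq
        exact h (Finsupp.ext fun i => ((this i (Finset.mem_univ i)).symm))
      obtain ⟨j, hj⟩ := hj
      have hzero : (∑ x ∈ S j, x ^ d j * Lagrange.nodalWeight (S j) id x) = 0 := by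
        rw [sum_pow_mul_nodalWeight _ _ (by have := hc j; omega : d j + 1 ≤ (S j).card), if_neg]
        rw [hc j]; omega
      rw [Finset.prod_eq_zero (Finset.mem_univ j) hzero, mul_zero]
  rw [Finset.sum_congr rfl step, Finset.sum_ite_eq' P.support _ P.coeff]
  by_cases ht : Finsupp.equivFunOnFinite.symm t ∈ P.support
  · rw [if_pos ht]
  · rw [if_neg ht, MvPolynomial.notMem_support_iff.mp ht]

open MvPolynomial in
theorem combinatorial_nullstellensatz {σ : Type*} [Fintype σ] [DecidableEq σ]
    (t : σ → ℕ) (P : MvPolynomial σ F)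
    (hP : P.coeff (Finsupp.equivFunOnFinite.symm t) ≠ 0)
    (hdeg : P.totalDegree ≤ ∑ i, t i)
    (S : σ → Finset F) (hS : ∀ i, t i + 1 ≤ (S i).card) :
    ∃ s : σ → F, (∀ i, s i ∈ S i) ∧ MvPolynomial.eval s P ≠ 0 := by
  have hsub : ∀ i, ∃ T : Finset F, T ⊆ S i ∧ T.card = t i + 1 := fun i =>
    Finset.exists_subset_card_eq (hS i)
  choose T hTsub hTcard using hsub
  have h := coeff_grid t T hTcard P hdeg
  rw [h] at hP
  obtain ⟨s, hs, hne⟩ := Finset.exists_ne_zero_of_sum_ne_zero hP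
  refine ⟨s, fun i => hTsub i ((Fintype.mem_piFinset.mp hs) i), fun h0 => hne ?_⟩
  rw [h0, zero_mul]

lemma isHomogeneous_pow_of_one {σ : Type*} (φ : MvPolynomial σ ℝ)
    (h : φ.IsHomogeneous 1) (k : ℕ) : (φ ^ k).IsHomogeneous k := by
  induction k with
  | zero => simpa using MvPolynomial.isHomogeneous_one σ ℝ
  | succ n ih => rw [pow_succ]; exact ih.mul h

end CNaux

/-- Combinatorial Nullstellensatz for edge choosability.
If `α_w x^w` is a nonzero term in the expansion of the edge monomial `ε(G)` of a
loopless graph `G`, then `G` is `(w + 1)`-edge choosable. -/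
theorem statement1 (V E : Type) [Fintype V] [DecidableEq V] [Fintype E] [DecidableEq E]
    [LinearOrder E] (ends : E → Sym2 V)
    (hloop : FLL.Loopless ends)
    (w : E → ℕ)
    (hw : MvPolynomial.coeff (Finsupp.equivFunOnFinite.symm w) (FLL.edgeMonomial ends) ≠ 0) :
    FLL.EdgeChoosable ends (fun e => w e + 1) := by
  classical
  intro L hL
  set D := ∑ p ∈ Finset.univ.filter (fun p : E × E => p.1 < p.2),
    (Finset.univ.filter fun v => v ∈ ends p.1 ∧ v ∈ ends p.2).card with hD
  have hhom : (FLL.edgeMonomial ends).IsHomogeneous D := by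
    apply MvPolynomial.IsHomogeneous.prod
    intro p _
    exact isHomogeneous_pow_of_one _
      ((MvPolynomial.isHomogeneous_X _ _).sub (MvPolynomial.isHomogeneous_X _ _)) _
  have hne0 : FLL.edgeMonomial ends ≠ 0 := by
    intro h0
    apply hw
    rw [h0, MvPolynomial.coeff_zero]
  have hdegsum : (Finsupp.equivFunOnFinite.symm w).degree = ∑ e, w e := by
    rw [Finsupp.degree]
    refine Finset.sum_subset (Finset.subset_univ _) ?_
    intro x _ hx
    exact Finsupp.notMem_support_iff.mp hx
  have hDw : D = ∑ e, w e := by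
    rw [← hdegsum]
    by_contra hne
    exact hw (hhom.coeff_eq_zero (Ne.symm hne))
  have htot : (FLL.edgeMonomial ends).totalDegree ≤ ∑ e, w e := by
    rw [hhom.totalDegree hne0, hDw]
  obtain ⟨s, hmem, heval⟩ := combinatorial_nullstellensatz w (FLL.edgeMonomial ends) hw htot
    (fun e => (L e).image (fun n : ℕ => (n : ℝ)))
    (fun e => by
      rw [Finset.card_image_of_injective _ Nat.cast_injective]
      exact hL e)
  have hex : ∀ e, ∃ n ∈ L e, (n : ℝ) = s e := fun e => Finset.mem_image.mp (hmem e)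
  choose c hcL hcs using hex
  have claim : ∀ a b : E, a < b → (∃ v, v ∈ ends a ∧ v ∈ ends b) → s a ≠ s b := by
    intro a b hab ⟨v, hv1, hv2⟩ hsab
    apply heval
    rw [FLL.edgeMonomial, map_prod]
    refine Finset.prod_eq_zero (Finset.mem_filter.mpr ⟨Finset.mem_univ (a, b), hab⟩) ?_
    have hk : (Finset.univ.filter fun u => u ∈ ends a ∧ u ∈ ends b).card ≠ 0 :=
      Finset.card_ne_zero_of_mem (Finset.mem_filter.mpr ⟨Finset.mem_univ v, hv1, hv2⟩)
    rw [map_pow, map_sub, MvPolynomial.eval_X, MvPolynomial.eval_X, hsab, sub_self,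
      zero_pow hk]
  refine ⟨c, ?_, hcL⟩
  intro e e' hne' hv heq
  have hseq : s e = s e' := by rw [← hcs e, ← hcs e', heq]
  rcases hne'.lt_or_gt with h | h
  · exact claim e e' h hv hseq
  · exact claim e' e h (by obtain ⟨v, h1, h2⟩ := hv; exact ⟨v, h2, h1⟩) hseq.symm
end

section
/- Let G be a loopless graph with a fixed ordering of E(G), let 𝒲 = {w_1, …, w_k} be a set of edge weightings of G, and let Π(𝒲) be the set of star labellings π of G whose exponent belongs to 𝒲. If the integer Σ_{π∈Π(𝒲)} sgn(π) is not zero, then G is (w_i + 1)-edge choosable for some i ∈ {1, …, k}. -/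
set_option linter.unusedSectionVars false

namespace EGAux

open Finset FLL

section Lagrange

lemma coeff_lagrange_basis (S : Finset ℝ) {x : ℝ} (hx : x ∈ S) :
    (Lagrange.basis S id x).coeff (S.card - 1) = ∏ b ∈ S.erase x, (x - b)⁻¹ := by
  have : Lagrange.basis S id x
      = Polynomial.C (∏ b ∈ S.erase x, (x - b)⁻¹) * ∏ b ∈ S.erase x, (Polynomial.X - Polynomial.C b) := by
    rw [Lagrange.basis]
    unfold Lagrange.basisDivisor
    rw [Finset.prod_mul_distrib, ← map_prod]
    simp
  rw [this]
  have hmonic : (∏ b ∈ S.erase x, (Polynomial.X - Polynomial.C b)).Monic :=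
    Polynomial.monic_prod_of_monic _ _ (fun b _ => Polynomial.monic_X_sub_C b)
  have hdeg : (∏ b ∈ S.erase x, (Polynomial.X - Polynomial.C b)).natDegree = S.card - 1 := by
    rw [Polynomial.natDegree_prod_of_monic _ _ (fun b _ => Polynomial.monic_X_sub_C b)]
    simp [Finset.card_erase_of_mem hx]
  rw [Polynomial.coeff_C_mul, ← hdeg, hmonic.coeff_natDegree, mul_one]

lemma lagrange_sum (S : Finset ℝ) (u : ℕ) (hu : u < S.card) :
    ∑ x ∈ S, x ^ u * ∏ b ∈ S.erase x, (x - b)⁻¹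
      = if u = S.card - 1 then 1 else 0 := by
  have hinj : Set.InjOn (id : ℝ → ℝ) S := Function.injective_id.injOn
  have hdeg : (Polynomial.X ^ u : Polynomial ℝ).degree < S.card := by
    simpa [Polynomial.degree_X_pow] using (Nat.cast_lt (α := WithBot ℕ)).2 hu
  have h := Lagrange.eq_interpolate (f := (Polynomial.X ^ u : Polynomial ℝ)) hinj hdeg
  have h2 := congrArg (fun p => Polynomial.coeff p (S.card - 1)) h
  simp only [Lagrange.interpolate_apply, Polynomial.finset_sum_coeff,
    Polynomial.coeff_C_mul, Polynomial.coeff_X_pow] at h2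
  rw [eq_comm] at h2
  rw [show (if u = S.card - 1 then (1:ℝ) else 0) = (if S.card - 1 = u then 1 else 0) by
    by_cases h : u = S.card - 1 <;> simp [h, eq_comm], ← h2]
  apply Finset.sum_congr rfl
  intro x hx
  rw [coeff_lagrange_basis S hx]
  simp [Polynomial.eval_pow]

end Lagrange


section VDM

variable {M : Type*} [CommMonoid M]

lemma prod_pairs_eq (d : ℕ) (g : Fin d × Fin d → M) :
    ∏ p ∈ univ.filter (fun p : Fin d × Fin d => p.1 < p.2), g p
      = ∏ i, ∏ j ∈ Ioi i, g (i, j) := by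
  rw [Finset.prod_sigma']
  refine Finset.prod_nbij' (fun p : Fin d × Fin d => (⟨p.1, p.2⟩ : Σ _ : Fin d, Fin d))
    (fun x : Σ _ : Fin d, Fin d => (x.1, x.2)) ?_ ?_ ?_ ?_ ?_
  · rintro ⟨a, b⟩ h
    simp only [mem_filter, mem_univ, true_and] at h
    simp [h]
  · rintro ⟨a, b⟩ h
    simp only [mem_sigma, mem_univ, mem_Ioi, true_and] at h
    simp [h]
  · rintro ⟨a, b⟩ _; rfl
  · rintro ⟨a, b⟩ _; rfl
  · rintro ⟨a, b⟩ _; rfl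

lemma sign_eq_prod_sign (d : ℕ) (σ : Equiv.Perm (Fin d)) :
    ((Equiv.Perm.sign σ : ℤ))
      = ∏ p ∈ univ.filter (fun p : Fin d × Fin d => p.1 < p.2),
          Int.sign ((σ p.2 : ℤ) - (σ p.1 : ℤ)) := by
  classical
  set v : Fin d → ℤ := fun i => (i : ℤ) with hv
  have h1 : (Matrix.vandermonde (v ∘ σ)).det
      = (Equiv.Perm.sign σ : ℤ) * (Matrix.vandermonde v).det := by
    have : Matrix.vandermonde (v ∘ σ) = (Matrix.vandermonde v).submatrix σ id := by
      ext i j; simp [Matrix.vandermonde_apply]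
    rw [this, Matrix.det_permute]; norm_cast
  have h2 : (Matrix.vandermonde (v ∘ σ)).det
      = ∏ p ∈ univ.filter (fun p : Fin d × Fin d => p.1 < p.2), ((σ p.2 : ℤ) - (σ p.1 : ℤ)) := by
    rw [Matrix.det_vandermonde]
    exact (prod_pairs_eq d (fun p : Fin d × Fin d => ((σ p.2 : ℤ) - (σ p.1 : ℤ)))).symm
  have h3 : (Matrix.vandermonde v).det
      = ∏ p ∈ univ.filter (fun p : Fin d × Fin d => p.1 < p.2), ((p.2 : ℤ) - (p.1 : ℤ)) := by
    rw [Matrix.det_vandermonde]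
    exact (prod_pairs_eq d (fun p : Fin d × Fin d => ((p.2 : ℤ) - (p.1 : ℤ)))).symm
  have hpos : 0 < ∏ p ∈ univ.filter (fun p : Fin d × Fin d => p.1 < p.2),
      ((p.2 : ℤ) - (p.1 : ℤ)) := by
    apply Finset.prod_pos
    rintro ⟨a, b⟩ h
    simp only [mem_filter, mem_univ, true_and] at h
    simp only [sub_pos]
    exact_mod_cast h
  set signHom : ℤ →* ℤ := { toFun := Int.sign, map_one' := rfl, map_mul' := Int.sign_mul }
  have key := congrArg signHom h2.symm
  rw [h1, h3, map_prod] at key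
  have h4 : signHom ((Equiv.Perm.sign σ : ℤ) *
      ∏ p ∈ univ.filter (fun p : Fin d × Fin d => p.1 < p.2), ((p.2 : ℤ) - (p.1 : ℤ)))
      = (Equiv.Perm.sign σ : ℤ) := by
    show Int.sign _ = _
    rw [Int.sign_mul]
    rcases Int.units_eq_one_or (Equiv.Perm.sign σ) with h | h <;>
      rw [h] <;> simp [Int.sign_eq_one_of_pos hpos]
  rw [h4] at key
  exact key.symm.trans (Finset.prod_congr rfl (fun p _ => rfl))

lemma vdm (d : ℕ) (y : Fin d → ℝ) :
    ∏ p ∈ univ.filter (fun p : Fin d × Fin d => p.1 < p.2), (y p.2 - y p.1)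
      = ∑ σ : Equiv.Perm (Fin d),
          (∏ p ∈ univ.filter (fun p : Fin d × Fin d => p.1 < p.2),
            ((Int.sign ((σ p.2 : ℤ) - (σ p.1 : ℤ))) : ℝ)) * ∏ i, y i ^ (σ i : ℕ) := by
  classical
  rw [prod_pairs_eq d (fun p : Fin d × Fin d => y p.2 - y p.1), ← Matrix.det_vandermonde,
    Matrix.det_apply]
  rw [← Equiv.sum_comp (Equiv.inv (Equiv.Perm (Fin d)))]
  apply Finset.sum_congr rfl
  intro σ _
  simp only [Equiv.inv_apply]
  have h1 : ∏ i, Matrix.vandermonde y (σ⁻¹ i) i = ∏ i, y i ^ (σ i : ℕ) := by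
    rw [← Equiv.prod_comp σ (fun i => Matrix.vandermonde y (σ⁻¹ i) i)]
    simp [Matrix.vandermonde_apply]
  rw [h1, Equiv.Perm.sign_inv]
  rw [Units.smul_def, zsmul_eq_mul]
  rw [sign_eq_prod_sign]
  push_cast
  ring

end VDM


section Graph

variable {V E : Type} [Fintype V] [DecidableEq V] [Fintype E] [DecidableEq E] [LinearOrder E]
variable (ends : E → Sym2 V)

instance : DecidableEq (Flag ends) :=
  fun a b => decidable_of_iff (a.1 = b.1) Subtype.ext_iff.symm

/-- Flags at a vertex. -/
def FlagsV (v : V) : Finset (Flag ends) := univ.filter (fun f => f.1.1 = v)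

/-- Pairs of flags at a common vertex belonging to `T`, in increasing edge order. -/
def PairsT (T : Finset V) : Finset (Flag ends × Flag ends) :=
  univ.filter (fun p => p.1.1.1 = p.2.1.1 ∧ p.2.1.1 ∈ T ∧ p.1.1.2 < p.2.1.2)

/-- Partial star labellings: bijective labellings at each vertex of `T`, zero elsewhere. -/
def SLT (T : Finset V) : Finset (Flag ends → ℕ) :=
  (Fintype.piFinset fun f : Flag ends =>
      if f.1.1 ∈ T then Finset.range (deg ends f.1.1) else {0}).filter
    (fun π => ∀ v ∈ T, (FlagsV ends v).image π = Finset.range (deg ends v))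

lemma flag_eq_of_same (v : V) {f g : Flag ends} (hf : f ∈ FlagsV ends v)
    (hg : g ∈ FlagsV ends v) (h : f.1.2 = g.1.2) : f = g := by
  rw [FlagsV, mem_filter] at hf hg
  exact Subtype.ext (Prod.ext (hf.2.trans hg.2.symm) h)

lemma edge_mem_of_flag (v : V) {f : Flag ends} (h : f.1.1 = v) :
    f.1.2 ∈ univ.filter (fun e => v ∈ ends e) := by
  rw [mem_filter]
  exact ⟨mem_univ _, h ▸ f.2⟩

lemma card_FlagsV (v : V) : (FlagsV ends v).card = deg ends v := by
  rw [deg, ← Finset.card_image_of_injOn (f := fun f : Flag ends => f.1.2)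
    (fun f hf g hg h => flag_eq_of_same ends v hf hg h)]
  congr 1
  apply Finset.Subset.antisymm
  · intro e he
    rw [mem_image] at he
    obtain ⟨f, hf, rfl⟩ := he
    exact edge_mem_of_flag ends v (mem_filter.mp hf).2
  · intro e he
    rw [mem_filter] at he
    exact mem_image.mpr ⟨⟨(v, e), he.2⟩, mem_filter.mpr ⟨mem_univ _, rfl⟩, rfl⟩

/-- The single-vertex Vandermonde expansion. -/
lemma claim_single (v : V) (x : E → ℝ) :
    ∏ p ∈ PairsT ends {v}, (x p.2.1.2 - x p.1.1.2)
      = ∑ π ∈ SLT ends {v},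
          (∏ p ∈ PairsT ends {v}, ((Int.sign ((π p.2 : ℤ) - (π p.1 : ℤ))) : ℝ))
            * ∏ f : Flag ends, x f.1.2 ^ π f := by
  classical
  set d := deg ends v with hd
  set Ed : Finset E := univ.filter (fun e => v ∈ ends e) with hEdd
  have hEdcard : Ed.card = d := rfl
  set m := Ed.orderIsoOfFin hEdcard with hm
  have hmemm : ∀ j : Fin d, v ∈ ends (m j) := by
    intro j
    have h2 := (m j).2
    exact (mem_filter.mp h2).2
  set fl : Fin d → Flag ends := fun j => ⟨(v, (m j : E)), hmemm j⟩ with hfl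
  have hflV : ∀ j, fl j ∈ FlagsV ends v := fun j => mem_filter.mpr ⟨mem_univ _, rfl⟩
  have hflinj : Function.Injective fl := by
    intro i j hij
    have h1 : (m i : E) = m j := congrArg (fun f : Flag ends => f.1.2) hij
    exact m.injective (Subtype.ext h1)
  have hFv : FlagsV ends v = univ.image fl := by
    apply Finset.Subset.antisymm
    · intro f hf
      have hfv : f.1.1 = v := (mem_filter.mp hf).2
      have hfe : f.1.2 ∈ Ed := edge_mem_of_flag ends v hfv
      refine mem_image.mpr ⟨m.symm ⟨f.1.2, hfe⟩, mem_univ _, ?_⟩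
      refine flag_eq_of_same ends v (hflV _) hf ?_
      show (m (m.symm ⟨f.1.2, hfe⟩) : E) = f.1.2
      rw [OrderIso.apply_symm_apply]
    · intro f hf
      obtain ⟨j, _, rfl⟩ := mem_image.mp hf
      exact hflV j
  -- transfer products over pairs
  have hpair : ∀ (g : Flag ends × Flag ends → ℝ),
      ∏ q ∈ univ.filter (fun q : Fin d × Fin d => q.1 < q.2), g (fl q.1, fl q.2)
        = ∏ p ∈ PairsT ends {v}, g p := by
    intro g
    refine Finset.prod_bij (fun q _ => (fl q.1, fl q.2)) ?_ ?_ ?_ ?_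
    · rintro ⟨a, b⟩ hq
      have hab : a < b := by simpa using hq
      refine mem_filter.mpr ⟨mem_univ _, rfl, mem_singleton.mpr rfl, ?_⟩
      show (m a : E) < m b
      exact Subtype.coe_lt_coe.mpr (m.strictMono hab)
    · rintro ⟨a, b⟩ ha ⟨a', b'⟩ hb h
      have h1 : fl a = fl a' := congrArg Prod.fst h
      have h2 : fl b = fl b' := congrArg Prod.snd h
      rw [Prod.mk.injEq]
      exact ⟨hflinj h1, hflinj h2⟩
    · rintro ⟨p1, p2⟩ hp
      rw [PairsT, mem_filter] at hp
      obtain ⟨-, hvv, hv2, hlt⟩ := hp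
      have hv2' : p2.1.1 = v := by simpa using hv2
      have hv1 : p1.1.1 = v := hvv.trans hv2'
      have h1 : p1 ∈ FlagsV ends v := mem_filter.mpr ⟨mem_univ _, hv1⟩
      have h2 : p2 ∈ FlagsV ends v := mem_filter.mpr ⟨mem_univ _, hv2'⟩
      rw [hFv, mem_image] at h1 h2
      obtain ⟨a, -, rfl⟩ := h1
      obtain ⟨b, -, rfl⟩ := h2
      refine ⟨(a, b), ?_, rfl⟩
      have hmab : (m a : E) < m b := hlt
      exact mem_filter.mpr ⟨mem_univ _, m.lt_iff_lt.mp (Subtype.coe_lt_coe.mp hmab)⟩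
    · exact fun a ha => rfl
  -- the labelling associated to a permutation
  set Φ : Equiv.Perm (Fin d) → Flag ends → ℕ := fun σ f =>
    if h : f.1.1 = v then (σ (m.symm ⟨f.1.2, edge_mem_of_flag ends v h⟩) : ℕ) else 0 with hΦ
  have hidx : ∀ (j : Fin d) (hh : ((fl j).1.2 : E) ∈ Ed), m.symm ⟨(fl j).1.2, hh⟩ = j := by
    intro j hh
    have h2 : (⟨(fl j).1.2, hh⟩ : {x // x ∈ Ed}) = m j := Subtype.ext rfl
    rw [h2, OrderIso.symm_apply_apply]
  have key_eval : ∀ σ j, Φ σ (fl j) = (σ j : ℕ) := by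
    intro σ j
    have hidx2 : ∀ (hh : (m j : E) ∈ Ed), m.symm ⟨(m j : E), hh⟩ = j := fun hh => by
      rw [show (⟨(m j : E), hh⟩ : {x // x ∈ Ed}) = m j from Subtype.ext rfl,
        OrderIso.symm_apply_apply]
    simp only [hΦ]
    exact Eq.trans (dif_pos rfl) (congrArg (fun i : Fin d => (σ i : ℕ)) (hidx2 (m j).2))
  have himg : ∀ σ : Equiv.Perm (Fin d),
      (univ : Finset (Fin d)).image (fun j => ((σ j : ℕ))) = range d := by
    intro σ
    ext n
    simp only [mem_image, mem_univ, true_and, mem_range]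
    constructor
    · rintro ⟨j, rfl⟩; exact (σ j).is_lt
    · intro hn; exact ⟨σ.symm ⟨n, hn⟩, by simp⟩
  have hΦmem : ∀ σ : Equiv.Perm (Fin d), Φ σ ∈ SLT ends {v} := by
    intro σ
    rw [SLT, mem_filter]
    constructor
    · rw [Fintype.mem_piFinset]
      intro f
      by_cases h : f.1.1 = v
      · rw [if_pos (by simpa using h), hΦ]
        simp only [dif_pos h, mem_range, h]
        exact (σ _).is_lt
      · rw [if_neg (by simpa using h), hΦ]
        simp [dif_neg h]
    · intro u hu
      rw [mem_singleton] at hu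
      subst hu
      rw [hFv, Finset.image_image]
      have hc : (Φ σ ∘ fl) = fun j => ((σ j : ℕ)) := funext (fun j => key_eval σ j)
      rw [hc, himg σ, ← hd]
  -- monomial transfer
  have hmon : ∀ σ : Equiv.Perm (Fin d),
      ∏ f : Flag ends, x f.1.2 ^ Φ σ f = ∏ j, x (m j) ^ (σ j : ℕ) := by
    intro σ
    rw [← Finset.prod_subset (Finset.subset_univ (FlagsV ends v))
      (fun f _ hf => by
        have h0 : Φ σ f = 0 := dif_neg (fun h => hf (mem_filter.mpr ⟨mem_univ _, h⟩))
        rw [h0, pow_zero])]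
    rw [hFv, Finset.prod_image (fun a _ b _ h => hflinj h)]
    exact Finset.prod_congr rfl (fun j _ => by rw [key_eval])
  -- main computation
  rw [← hpair (fun p => x p.2.1.2 - x p.1.1.2)]
  rw [vdm d (fun j => x (m j))]
  refine Finset.sum_bij (fun σ _ => Φ σ) (fun σ _ => hΦmem σ) ?_ ?_ ?_
  · intro σ hσ σ' hσ' h
    ext j
    have h2 : Φ σ (fl j) = Φ σ' (fl j) := congrFun h (fl j)
    rw [key_eval, key_eval] at h2
    exact h2
  · intro π hπ
    rw [SLT, mem_filter] at hπ
    obtain ⟨hpi, hst⟩ := hπ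
    have hrange := hst v (mem_singleton_self v)
    have hlt : ∀ j : Fin d, π (fl j) < d := by
      intro j
      have hin : π (fl j) ∈ (FlagsV ends v).image π := mem_image_of_mem _ (hflV j)
      rw [hrange] at hin
      simpa using hin
    have hinjOn : Set.InjOn π (FlagsV ends v) := by
      apply Finset.injOn_of_card_image_eq
      rw [hrange, card_range, card_FlagsV]
    set g : Fin d → Fin d := fun j => ⟨π (fl j), hlt j⟩ with hg
    have hginj : Function.Injective g := by
      intro i j hij
      apply hflinj
      exact hinjOn (Finset.mem_coe.mpr (hflV i)) (Finset.mem_coe.mpr (hflV j))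
        (congrArg Fin.val hij)
    set σ₀ := Equiv.ofBijective g ((Finite.injective_iff_bijective).mp hginj) with hσ₀
    refine ⟨σ₀, mem_univ _, ?_⟩
    show Φ σ₀ = π
    funext f
    by_cases h : f.1.1 = v
    · have hf : f ∈ FlagsV ends v := mem_filter.mpr ⟨mem_univ _, h⟩
      rw [hFv, mem_image] at hf
      obtain ⟨j, -, rfl⟩ := hf
      rw [key_eval]
      rfl
    · rw [Fintype.mem_piFinset] at hpi
      have h0 := hpi f
      rw [if_neg (by simpa using h)] at h0
      rw [mem_singleton] at h0
      rw [hΦ]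
      simp [dif_neg h, h0]
  · intro σ hσ
    rw [← hpair (fun p => ((Int.sign ((Φ σ p.2 : ℤ) - (Φ σ p.1 : ℤ))) : ℝ)), hmon σ]
    congr 1
    apply Finset.prod_congr rfl
    rintro ⟨a, b⟩ hq
    rw [key_eval, key_eval]

lemma SLT_zero {T : Finset V} {π : Flag ends → ℕ} (hπ : π ∈ SLT ends T)
    {f : Flag ends} (hf : f.1.1 ∉ T) : π f = 0 := by
  rw [SLT, mem_filter, Fintype.mem_piFinset] at hπ
  have h := hπ.1 f
  rw [if_neg hf] at h
  simpa using h

lemma SLT_range {T : Finset V} {π : Flag ends → ℕ} (hπ : π ∈ SLT ends T)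
    {f : Flag ends} (hf : f.1.1 ∈ T) : π f ∈ range (deg ends f.1.1) := by
  rw [SLT, mem_filter, Fintype.mem_piFinset] at hπ
  have h := hπ.1 f
  rwa [if_pos hf] at h

lemma SLT_filter {T : Finset V} {π : Flag ends → ℕ} (hπ : π ∈ SLT ends T)
    {v : V} (hv : v ∈ T) : (FlagsV ends v).image π = range (deg ends v) :=
  (mem_filter.mp hπ).2 v hv

/-- The multi-vertex Vandermonde expansion, by induction on the vertex set. -/
lemma claim_T (T : Finset V) (x : E → ℝ) :
    ∏ p ∈ PairsT ends T, (x p.2.1.2 - x p.1.1.2)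
      = ∑ π ∈ SLT ends T,
          (∏ p ∈ PairsT ends T, ((Int.sign ((π p.2 : ℤ) - (π p.1 : ℤ))) : ℝ))
            * ∏ f : Flag ends, x f.1.2 ^ π f := by
  classical
  induction T using Finset.induction with
  | empty =>
    have h1 : PairsT ends (∅ : Finset V) = ∅ := by
      ext p; simp [PairsT]
    have h2 : SLT ends (∅ : Finset V) = {fun _ => 0} := by
      ext π
      simp [SLT, Fintype.mem_piFinset, funext_iff]
    rw [h1, h2]
    simp
  | @insert v T hv ih =>
    have hsplit : PairsT ends (insert v T) = PairsT ends {v} ∪ PairsT ends T := by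
      ext p
      simp only [PairsT, mem_filter, mem_union, mem_insert, mem_singleton, mem_univ, true_and]
      constructor
      · rintro ⟨h1, h2 | h2, h3⟩
        · exact Or.inl ⟨h1, h2, h3⟩
        · exact Or.inr ⟨h1, h2, h3⟩
      · rintro (⟨h1, h2, h3⟩ | ⟨h1, h2, h3⟩)
        · exact ⟨h1, Or.inl h2, h3⟩
        · exact ⟨h1, Or.inr h2, h3⟩
    have hdisj : Disjoint (PairsT ends {v}) (PairsT ends T) := by
      rw [Finset.disjoint_left]
      rintro p hp1 hp2
      rw [PairsT, mem_filter] at hp1 hp2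
      have h1 : p.2.1.1 = v := by simpa using hp1.2.2.1
      exact hv (h1 ▸ hp2.2.2.1)
    -- the summand over the extended vertex set
    set F : (Flag ends → ℕ) → ℝ := fun π =>
      (∏ p ∈ PairsT ends (insert v T), ((Int.sign ((π p.2 : ℤ) - (π p.1 : ℤ))) : ℝ))
        * ∏ f : Flag ends, x f.1.2 ^ π f with hF
    have hbij : ∑ π ∈ SLT ends (insert v T), F π
        = ∑ q ∈ (SLT ends {v}) ×ˢ (SLT ends T), F (q.1 + q.2) := by
      refine Finset.sum_nbij' (fun π => ((fun f => if f.1.1 = v then π f else 0),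
          (fun f => if f.1.1 = v then 0 else π f))) (fun q => q.1 + q.2) ?_ ?_ ?_ ?_ ?_
      · intro π hπ
        rw [Finset.mem_product]
        dsimp only
        constructor
        · rw [SLT, mem_filter]
          constructor
          · rw [Fintype.mem_piFinset]
            intro f
            by_cases h : f.1.1 = v
            · rw [if_pos (mem_singleton.mpr h), if_pos h]
              exact SLT_range ends hπ (mem_insert.mpr (Or.inl h))
            · rw [if_neg (fun hc => h (mem_singleton.mp hc)), if_neg h]
              exact mem_singleton_self 0
          · intro u hu
            rw [mem_singleton] at hu
            rw [Finset.image_congr (g := π) (fun f hf => by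
              rw [Finset.mem_coe, FlagsV, mem_filter] at hf
              exact if_pos (hf.2.trans hu))]
            rw [hu]
            exact SLT_filter ends hπ (mem_insert_self v T)
        · rw [SLT, mem_filter]
          constructor
          · rw [Fintype.mem_piFinset]
            intro f
            by_cases h : f.1.1 ∈ T
            · have hne : f.1.1 ≠ v := fun hc => hv (hc ▸ h)
              rw [if_pos h, if_neg hne]
              exact SLT_range ends hπ (mem_insert.mpr (Or.inr h))
            · rw [if_neg h]
              by_cases h2 : f.1.1 = v
              · rw [if_pos h2]; exact mem_singleton_self 0
              · rw [if_neg h2]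
                rw [SLT_zero ends hπ (fun hc => (mem_insert.mp hc).elim h2 h)]
                exact mem_singleton_self 0
          · intro u hu
            have hne : ∀ f : Flag ends, f ∈ FlagsV ends u → f.1.1 ≠ v := by
              intro f hf
              rw [FlagsV, mem_filter] at hf
              rw [hf.2]
              exact fun hc => hv (hc ▸ hu)
            rw [Finset.image_congr (g := π) (fun f hf => by
              rw [Finset.mem_coe] at hf
              exact if_neg (hne f hf))]
            exact SLT_filter ends hπ (mem_insert.mpr (Or.inr hu))
      · intro q hq
        rw [Finset.mem_product] at hq
        obtain ⟨hq1, hq2⟩ := hq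
        rw [SLT, mem_filter]
        constructor
        · rw [Fintype.mem_piFinset]
          intro f
          by_cases h : f.1.1 = v
          · rw [if_pos (mem_insert.mpr (Or.inl h))]
            have h2 : q.2 f = 0 := SLT_zero ends hq2 (fun hc => hv (h ▸ hc))
            have h1 : q.1 f ∈ range (deg ends f.1.1) :=
              SLT_range ends hq1 (mem_singleton.mpr h)
            simpa [Pi.add_apply, h2] using h1
          · have h1 : q.1 f = 0 :=
              SLT_zero ends hq1 (fun hc => h (mem_singleton.mp hc))
            by_cases h2 : f.1.1 ∈ T
            · rw [if_pos (mem_insert.mpr (Or.inr h2))]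
              have h3 : q.2 f ∈ range (deg ends f.1.1) := SLT_range ends hq2 h2
              simpa [Pi.add_apply, h1] using h3
            · rw [if_neg (fun hc => (mem_insert.mp hc).elim h h2)]
              have h3 : q.2 f = 0 := SLT_zero ends hq2 h2
              simp [Pi.add_apply, h1, h3]
        · intro u hu
          rcases mem_insert.mp hu with rfl | hu2
          · rw [Finset.image_congr (g := q.1) (fun f hf => by
              rw [Finset.mem_coe, FlagsV, mem_filter] at hf
              have h2 : q.2 f = 0 := SLT_zero ends hq2 (fun hc => hv (hf.2 ▸ hc))
              simp [Pi.add_apply, h2])]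
            exact SLT_filter ends hq1 (mem_singleton_self u)
          · rw [Finset.image_congr (g := q.2) (fun f hf => by
              rw [Finset.mem_coe, FlagsV, mem_filter] at hf
              have h1 : q.1 f = 0 := SLT_zero ends hq1 (by
                rw [mem_singleton, hf.2]
                exact fun hc => hv (hc ▸ hu2))
              simp [Pi.add_apply, h1])]
            exact SLT_filter ends hq2 hu2
      · intro π hπ
        dsimp only
        funext f
        by_cases h : f.1.1 = v <;> simp [Pi.add_apply, h]
      · intro q hq
        rw [Finset.mem_product] at hq
        obtain ⟨hq1, hq2⟩ := hq
        have e1 : ∀ f : Flag ends, f.1.1 = v → q.2 f = 0 :=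
          fun f hf => SLT_zero ends hq2 (fun hc => hv (hf ▸ hc))
        have e2 : ∀ f : Flag ends, f.1.1 ≠ v → q.1 f = 0 :=
          fun f hf => SLT_zero ends hq1 (fun hc => hf (mem_singleton.mp hc))
        ext f
        · by_cases h : f.1.1 = v <;> simp [Pi.add_apply, h, e1 f, e2 f]
        · by_cases h : f.1.1 = v <;> simp [Pi.add_apply, h, e1 f, e2 f]
      · intro π hπ
        dsimp only
        have h2 : ((fun f : Flag ends => if f.1.1 = v then π f else 0)
            + fun f : Flag ends => if f.1.1 = v then 0 else π f) = π := by
          funext f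
          by_cases h : f.1.1 = v <;> simp [Pi.add_apply, h]
        rw [h2]
    -- factor the summand for a pair of partial labellings
    have hfact : ∀ q ∈ (SLT ends {v}) ×ˢ (SLT ends T), F (q.1 + q.2)
        = ((∏ p ∈ PairsT ends {v}, ((Int.sign ((q.1 p.2 : ℤ) - (q.1 p.1 : ℤ))) : ℝ))
            * ∏ f : Flag ends, x f.1.2 ^ q.1 f)
          * ((∏ p ∈ PairsT ends T, ((Int.sign ((q.2 p.2 : ℤ) - (q.2 p.1 : ℤ))) : ℝ))
            * ∏ f : Flag ends, x f.1.2 ^ q.2 f) := by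
      intro q hq
      rw [Finset.mem_product] at hq
      obtain ⟨hq1, hq2⟩ := hq
      have e1 : ∀ f : Flag ends, f.1.1 = v → q.2 f = 0 :=
        fun f hf => SLT_zero ends hq2 (fun hc => hv (hf ▸ hc))
      have e2 : ∀ f : Flag ends, f.1.1 ≠ v → q.1 f = 0 :=
        fun f hf => SLT_zero ends hq1 (fun hc => hf (mem_singleton.mp hc))
      rw [hF]
      simp only [hsplit, Finset.prod_union hdisj]
      have hs1 : ∏ p ∈ PairsT ends {v},
          ((Int.sign (((q.1 + q.2) p.2 : ℤ) - ((q.1 + q.2) p.1 : ℤ))) : ℝ)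
          = ∏ p ∈ PairsT ends {v}, ((Int.sign ((q.1 p.2 : ℤ) - (q.1 p.1 : ℤ))) : ℝ) := by
        apply Finset.prod_congr rfl
        intro p hp
        rw [PairsT, mem_filter] at hp
        have hv2 : p.2.1.1 = v := by simpa using hp.2.2.1
        have hv1 : p.1.1.1 = v := hp.2.1.trans hv2
        rw [show (q.1 + q.2) p.2 = q.1 p.2 by simp [Pi.add_apply, e1 p.2 hv2],
          show (q.1 + q.2) p.1 = q.1 p.1 by simp [Pi.add_apply, e1 p.1 hv1]]
      have hs2 : ∏ p ∈ PairsT ends T,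
          ((Int.sign (((q.1 + q.2) p.2 : ℤ) - ((q.1 + q.2) p.1 : ℤ))) : ℝ)
          = ∏ p ∈ PairsT ends T, ((Int.sign ((q.2 p.2 : ℤ) - (q.2 p.1 : ℤ))) : ℝ) := by
        apply Finset.prod_congr rfl
        intro p hp
        rw [PairsT, mem_filter] at hp
        have hv2 : p.2.1.1 ∈ T := hp.2.2.1
        have hne2 : p.2.1.1 ≠ v := fun hc => hv (hc ▸ hv2)
        have hne1 : p.1.1.1 ≠ v := fun hc => hne2 (hp.2.1.symm.trans hc)
        rw [show (q.1 + q.2) p.2 = q.2 p.2 by simp [Pi.add_apply, e2 p.2 hne2],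
          show (q.1 + q.2) p.1 = q.2 p.1 by simp [Pi.add_apply, e2 p.1 hne1]]
      have hm : ∏ f : Flag ends, x f.1.2 ^ (q.1 + q.2) f
          = (∏ f : Flag ends, x f.1.2 ^ q.1 f) * ∏ f : Flag ends, x f.1.2 ^ q.2 f := by
        rw [← Finset.prod_mul_distrib]
        apply Finset.prod_congr rfl
        intro f _
        rw [Pi.add_apply, pow_add]
      rw [hs1, hs2, hm]
      ring
    rw [hsplit, Finset.prod_union hdisj, claim_single ends v x, ih]
    rw [Finset.sum_mul_sum]
    rw [show (∑ π ∈ SLT ends (insert v T),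
        (∏ p ∈ PairsT ends (insert v T), ((Int.sign ((π p.2 : ℤ) - (π p.1 : ℤ))) : ℝ))
          * ∏ f : Flag ends, x f.1.2 ^ π f) = ∑ π ∈ SLT ends (insert v T), F π from rfl]
    rw [hbij, Finset.sum_product]
    apply Finset.sum_congr rfl
    intro σ hσ
    apply Finset.sum_congr rfl
    intro π' hπ'
    exact (hfact (σ, π') (Finset.mem_product.mpr ⟨hσ, hπ'⟩)).symm

lemma PairsT_univ : PairsT ends (univ : Finset V)
    = univ.filter (fun p : Flag ends × Flag ends =>
        p.1.1.1 = p.2.1.1 ∧ p.1.1.2 < p.2.1.2) := by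
  ext p; simp [PairsT]

/-- The full star-labelling expansion of the evaluated edge polynomial. -/
lemma expand (x : E → ℝ) :
    ∏ p ∈ univ.filter (fun p : Flag ends × Flag ends =>
        p.1.1.1 = p.2.1.1 ∧ p.1.1.2 < p.2.1.2), (x p.2.1.2 - x p.1.1.2)
      = ∑ π ∈ SLT ends univ, (starSign ends π : ℝ) * ∏ f : Flag ends, x f.1.2 ^ π f := by
  rw [← PairsT_univ, claim_T]
  apply Finset.sum_congr rfl
  intro π _
  congr 1
  rw [starSign, Int.cast_prod, ← PairsT_univ]

lemma mem_SLT_univ_iff (π : Flag ends → ℕ) :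
    π ∈ SLT ends univ ↔ IsStarLabelling ends π := by
  constructor
  · intro h v
    exact (mem_filter.mp h).2 v (mem_univ v)
  · intro h
    rw [SLT, mem_filter]
    refine ⟨?_, fun v _ => h v⟩
    rw [Fintype.mem_piFinset]
    intro f
    rw [if_pos (mem_univ _)]
    have h2 : π f ∈ (univ.filter (fun fl : Flag ends => fl.1.1 = f.1.1)).image π :=
      mem_image_of_mem _ (mem_filter.mpr ⟨mem_univ _, rfl⟩)
    rw [h f.1.1] at h2
    exact h2

lemma total_exponent (π : Flag ends → ℕ) (h : IsStarLabelling ends π) :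
    ∑ e : E, exponent ends π e = ∑ v : V, ∑ j ∈ range (deg ends v), j := by
  have h1 : ∑ e : E, exponent ends π e = ∑ f : Flag ends, π f :=
    Finset.sum_fiberwise univ (fun f : Flag ends => f.1.2) π
  have h2 : ∑ f : Flag ends, π f = ∑ v : V, ∑ f ∈ FlagsV ends v, π f :=
    (Finset.sum_fiberwise univ (fun f : Flag ends => f.1.1) π).symm
  rw [h1, h2]
  apply Finset.sum_congr rfl
  intro v _
  have himg : (FlagsV ends v).image π = range (deg ends v) := h v
  have hcard : ((FlagsV ends v).image π).card = (FlagsV ends v).card := by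
    rw [himg, card_range, card_FlagsV]
  have hinj := Finset.injOn_of_card_image_eq hcard
  rw [← himg]
  rw [Finset.sum_image (fun a ha b hb hab => hinj ha hb hab)]

end Graph

end EGAux

open Finset FLL EGAux in
/-- Corollary 2.3.  Let `𝒲 = {w_1, …, w_k}` be a set of edge
weightings of a loopless graph `G` and let `Π(𝒲)` be the set of star labellings of `G`
whose exponent lies in `𝒲`.  If `Σ_{π ∈ Π(𝒲)} sgn(π) ≠ 0`, then `G` is
`(w_i + 1)`-edge choosable for some `i`. -/
theorem statement3 (V E : Type) [Fintype V] [DecidableEq V] [Fintype E] [DecidableEq E]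
    [LinearOrder E] (ends : E → Sym2 V)
    (hloop : FLL.Loopless ends)
    (k : ℕ) (w : Fin k → E → ℕ)
    (hsum : (∑ᶠ π ∈ {π : FLL.Flag ends → ℕ |
        FLL.IsStarLabelling ends π ∧ ∃ i, FLL.exponent ends π = w i},
        FLL.starSign ends π) ≠ 0) :
    ∃ i, FLL.EdgeChoosable ends (fun e => w i e + 1) := by
  classical
  set SW : Finset (Flag ends → ℕ) :=
    (SLT ends univ).filter (fun π => ∃ i, exponent ends π = w i) with hSW
  have hset : {π : Flag ends → ℕ | IsStarLabelling ends π ∧ ∃ i, exponent ends π = w i}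
      = (SW : Set (Flag ends → ℕ)) := by
    ext π
    rw [Set.mem_setOf_eq, Finset.mem_coe, hSW, mem_filter, mem_SLT_univ_iff]
  rw [hset, finsum_mem_coe_finset] at hsum
  have hex : ∃ i, (∑ π ∈ (SLT ends univ).filter (fun π => exponent ends π = w i),
      starSign ends π) ≠ 0 := by
    by_contra hno
    push_neg at hno
    apply hsum
    rw [← Finset.sum_fiberwise_of_maps_to (g := exponent ends) (t := univ.image w)
      (fun π hπ => by
        obtain ⟨i, hi⟩ := (mem_filter.mp hπ).2
        exact mem_image.mpr ⟨i, mem_univ i, hi.symm⟩) (starSign ends)]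
    apply Finset.sum_eq_zero
    intro u hu
    obtain ⟨i, -, rfl⟩ := mem_image.mp hu
    have heq : SW.filter (fun π => exponent ends π = w i)
        = (SLT ends univ).filter (fun π => exponent ends π = w i) := by
      ext π
      rw [hSW, Finset.filter_filter, mem_filter, mem_filter]
      constructor
      · rintro ⟨h1, h2, h3⟩; exact ⟨h1, h3⟩
      · rintro ⟨h1, h3⟩; exact ⟨h1, ⟨i, h3⟩, h3⟩
    rw [heq]
    exact hno i
  obtain ⟨i, hAi⟩ := hex
  refine ⟨i, ?_⟩
  intro L hL
  choose L' hL'sub hL'card using fun e => Finset.exists_subset_card_eq (hL e)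
  set S : E → Finset ℝ := fun e => (L' e).image (fun n : ℕ => (n : ℝ)) with hS
  have hScard : ∀ e, (S e).card = w i e + 1 := by
    intro e
    rw [hS]
    rw [Finset.card_image_of_injective _ Nat.cast_injective, hL'card]
  have hne : ((SLT ends univ).filter (fun π => exponent ends π = w i)).Nonempty := by
    rw [Finset.nonempty_iff_ne_empty]
    intro h
    rw [h, Finset.sum_empty] at hAi
    exact hAi rfl
  obtain ⟨π₀, hπ₀⟩ := hne
  have hwsum : ∑ e : E, w i e = ∑ v : V, ∑ j ∈ range (deg ends v), j := by
    rw [← (mem_filter.mp hπ₀).2]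
    exact total_exponent ends π₀ ((mem_SLT_univ_iff ends π₀).mp (mem_filter.mp hπ₀).1)
  set wt : E → ℕ → ℝ := fun e n => ∏ b ∈ (S e).erase ((n : ℝ)), (((n : ℝ)) - b)⁻¹ with hwt
  set N : (E → ℕ) → ℝ := fun s => ∏ p ∈ univ.filter (fun p : Flag ends × Flag ends =>
      p.1.1.1 = p.2.1.1 ∧ p.1.1.2 < p.2.1.2), ((s p.2.1.2 : ℝ) - (s p.1.1.2 : ℝ)) with hN
  have hkey : ∑ s ∈ Fintype.piFinset L', N s * ∏ e : E, wt e (s e)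
      = ((∑ π ∈ (SLT ends univ).filter (fun π => exponent ends π = w i),
          starSign ends π : ℤ) : ℝ) := by
    have step1 : ∀ s : E → ℕ, N s * ∏ e : E, wt e (s e)
        = ∑ π ∈ SLT ends univ, (starSign ends π : ℝ)
            * ((∏ f : Flag ends, ((s f.1.2 : ℝ)) ^ π f) * ∏ e : E, wt e (s e)) := by
      intro s
      simp only [hN]
      rw [expand ends (fun e => (s e : ℝ))]
      rw [Finset.sum_mul]
      apply Finset.sum_congr rfl
      intro π _
      ring
    rw [Finset.sum_congr rfl (fun s _ => step1 s)]
    rw [Finset.sum_comm]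
    have inner : ∀ π ∈ SLT ends univ,
        ∑ s ∈ Fintype.piFinset L',
          (starSign ends π : ℝ) * ((∏ f : Flag ends, ((s f.1.2 : ℝ)) ^ π f) * ∏ e, wt e (s e))
        = (starSign ends π : ℝ) * (if exponent ends π = w i then 1 else 0) := by
      intro π hπ
      rw [← Finset.mul_sum]
      congr 1
      have hmon : ∀ s : E → ℕ, (∏ f : Flag ends, ((s f.1.2 : ℝ)) ^ π f)
          = ∏ e : E, ((s e : ℝ)) ^ exponent ends π e := by
        intro s
        rw [← Finset.prod_fiberwise univ (fun f : Flag ends => f.1.2)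
          (fun f => ((s f.1.2 : ℝ)) ^ π f)]
        apply Finset.prod_congr rfl
        intro e _
        rw [exponent]
        rw [← Finset.prod_pow_eq_pow_sum]
        apply Finset.prod_congr rfl
        intro f hf
        rw [(mem_filter.mp hf).2]
      have hsum2 : ∑ s ∈ Fintype.piFinset L',
          ((∏ f : Flag ends, ((s f.1.2 : ℝ)) ^ π f) * ∏ e, wt e (s e))
          = ∏ e : E, ∑ n ∈ L' e, ((n : ℝ)) ^ exponent ends π e * wt e n := by
        rw [Finset.prod_univ_sum]
        apply Finset.sum_congr rfl
        intro s _
        rw [hmon s, ← Finset.prod_mul_distrib]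
      rw [hsum2]
      have hfac : ∀ e : E, exponent ends π e < (S e).card →
          (∑ n ∈ L' e, ((n : ℝ)) ^ exponent ends π e * wt e n
            = if exponent ends π e = w i e then 1 else 0) := by
        intro e he
        have himage : ∑ n ∈ L' e, ((n : ℝ)) ^ exponent ends π e * wt e n
            = ∑ y ∈ S e, y ^ exponent ends π e * ∏ b ∈ (S e).erase y, (y - b)⁻¹ := by
          rw [hS]
          rw [Finset.sum_image (fun a _ b _ hab => Nat.cast_injective hab)]
        rw [himage, lagrange_sum (S e) _ he, hScard e]
        simp
      by_cases hcase : exponent ends π = w i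
      · rw [if_pos hcase]
        apply Finset.prod_eq_one
        intro e _
        rw [hfac e (by rw [hScard e, hcase]; exact Nat.lt_succ_self _)]
        rw [if_pos (by rw [hcase])]
      · rw [if_neg hcase]
        have hexsum : ∑ e : E, exponent ends π e = ∑ e : E, w i e := by
          rw [hwsum]
          exact total_exponent ends π ((mem_SLT_univ_iff ends π).mp hπ)
        have hdef : ∃ e₀ : E, exponent ends π e₀ < w i e₀ := by
          by_contra hno2
          push_neg at hno2
          apply hcase
          funext e
          exact ((Finset.sum_eq_sum_iff_of_le (fun e _ => hno2 e)).mp hexsum.symm e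
            (mem_univ e)).symm
        obtain ⟨e₀, he₀⟩ := hdef
        apply Finset.prod_eq_zero (mem_univ e₀)
        rw [hfac e₀ (by rw [hScard e₀]; omega)]
        rw [if_neg (by omega)]
    rw [Finset.sum_congr rfl inner]
    simp only [mul_ite, mul_one, mul_zero]
    rw [← Finset.sum_filter]
    rw [Int.cast_sum]
  have hex2 : ∃ s ∈ Fintype.piFinset L', N s * ∏ e : E, wt e (s e) ≠ 0 := by
    by_contra h
    push_neg at h
    rw [Finset.sum_eq_zero h] at hkey
    apply hAi
    exact_mod_cast hkey.symm
  obtain ⟨s, hsgrid, hsne⟩ := hex2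
  have hN0 : (∏ p ∈ univ.filter (fun p : Flag ends × Flag ends =>
      p.1.1.1 = p.2.1.1 ∧ p.1.1.2 < p.2.1.2),
        ((s p.2.1.2 : ℝ) - (s p.1.1.2 : ℝ))) ≠ 0 := left_ne_zero_of_mul hsne
  refine ⟨s, ?_, ?_⟩
  · intro e e' hee' hshare
    obtain ⟨u, hu, hu'⟩ := hshare
    have key : ∀ a b : E, a < b → u ∈ ends a → u ∈ ends b → s b ≠ s a := by
      intro a b hab ha hb
      have hpmem : ((⟨(u, a), ha⟩ : Flag ends), (⟨(u, b), hb⟩ : Flag ends))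
          ∈ univ.filter (fun p : Flag ends × Flag ends =>
            p.1.1.1 = p.2.1.1 ∧ p.1.1.2 < p.2.1.2) :=
        mem_filter.mpr ⟨mem_univ _, rfl, hab⟩
      have hfac2 := Finset.prod_ne_zero_iff.mp hN0 _ hpmem
      intro hc
      apply hfac2
      show ((s b : ℝ)) - ((s a : ℝ)) = 0
      rw [hc, sub_self]
    rcases lt_or_gt_of_ne hee' with hlt | hlt
    · exact (key e e' hlt hu hu').symm
    · exact key e' e hlt hu' hu
  · intro e
    exact hL'sub e (Fintype.mem_piFinset.mp hsgrid e)
end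

section
/- Let G be a loopless cubic graph, let e be a cut-edge of G with endpoint v, and let L be the subgraph of G induced by the vertices of the connected component of G − e containing v. If π is a star labelling of G whose exponent w satisfies Σ_{e′∈E(L)} w(e′) = 2·|E(L)|, then π_v(e) = 1. In particular (Proposition 5.1 of the paper), any star labelling of G whose exponent has average value 2 on each side of every cut-edge assigns the label 1 to both flags of every cut-edge. -/
namespace FLL

variable {V E : Type}

/-- Reachability avoiding a set `X` of edges. -/
def ReachAvoiding (ends : E → Sym2 V) (X : Set E) : V → V → Prop :=
  Relation.ReflTransGen (fun u v => ∃ e, e ∉ X ∧ ends e = s(u, v))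

/-- A cut-edge: its removal disconnects its two endpoints. -/
def IsCutEdge (ends : E → Sym2 V) (e : E) : Prop :=
  ∀ u v : V, ends e = s(u, v) → ¬ ReachAvoiding ends {e} u v

variable [Fintype V] [DecidableEq V] [Fintype E] [DecidableEq E]

/-- `M_π`: the set of edges both of whose flags receive label `1` under `π`. -/
def Mpi (ends : E → Sym2 V) (π : Flag ends → ℕ) : Set E :=
  {e | ∀ fl : Flag ends, fl.1.2 = e → π fl = 1}

end FLL

open FLL

section Aux

open Finset

variable {V E : Type} [Fintype V] [DecidableEq V] [Fintype E] [DecidableEq E]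

lemma flagsAt_card (ends : E → Sym2 V) (u : V) :
    (Finset.univ.filter fun fl : Flag ends => fl.1.1 = u).card = deg ends u := by
  rw [deg]
  apply Finset.card_bij (fun fl _ => fl.1.2)
  · intro fl hfl
    simp only [Finset.mem_filter, Finset.mem_univ, true_and] at hfl ⊢
    rw [← hfl]; exact fl.2
  · intro fl hfl fl' hfl' h
    simp only [Finset.mem_filter, Finset.mem_univ, true_and] at hfl hfl'
    exact Subtype.ext (Prod.ext (hfl.trans hfl'.symm) h)
  · intro e he
    simp only [Finset.mem_filter, Finset.mem_univ, true_and] at he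
    exact ⟨⟨(u, e), he⟩, Finset.mem_filter.mpr ⟨Finset.mem_univ _, rfl⟩, rfl⟩

lemma flagsAt_sum (ends : E → Sym2 V) (π : Flag ends → ℕ)
    (hπ : IsStarLabelling ends π) (hcubic : ∀ v, deg ends v = 3) (u : V) :
    ∑ fl ∈ Finset.univ.filter (fun fl : Flag ends => fl.1.1 = u), π fl = 3 := by
  set s := Finset.univ.filter (fun fl : Flag ends => fl.1.1 = u) with hs
  have himg : s.image π = Finset.range 3 := by rw [hs, hπ u, hcubic u]
  have hcard : (s.image π).card = s.card := by
    rw [himg, Finset.card_range, hs, flagsAt_card, hcubic]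
  have hinj := Finset.injOn_of_card_image_eq hcard
  have h2 : ∑ x ∈ s.image π, id x = ∑ x ∈ s, id (π x) :=
    Finset.sum_image (fun x hx y hy h => hinj hx hy h)
  rw [himg] at h2
  simpa [Finset.sum_range_succ] using h2.symm

lemma flagsOf_card (ends : E → Sym2 V) (hloop : Loopless ends) (e : E) :
    (Finset.univ.filter fun fl : Flag ends => fl.1.2 = e).card = 2 := by
  classical
  obtain ⟨⟨a, b⟩, hab⟩ := Quot.exists_rep (ends e)
  have hab' : ends e = s(a, b) := hab.symm
  have hne : a ≠ b := by
    intro h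
    exact hloop e (by rw [hab', h]; exact Sym2.mk_isDiag_iff.mpr rfl)
  have ha : a ∈ ends e := by rw [hab']; exact Sym2.mem_mk_left a b
  have hb : b ∈ ends e := by rw [hab']; exact Sym2.mem_mk_right a b
  have hset : (Finset.univ.filter fun fl : Flag ends => fl.1.2 = e)
      = {⟨(a, e), ha⟩, ⟨(b, e), hb⟩} := by
    ext fl
    simp only [Finset.mem_filter, Finset.mem_univ, true_and, Finset.mem_insert,
      Finset.mem_singleton]
    constructor
    · intro h
      have hm : fl.1.1 ∈ ends e := h ▸ fl.2
      rw [hab', Sym2.mem_iff] at hm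
      rcases hm with h1 | h1
      · rw [show fl = ⟨(a, e), ha⟩ from Subtype.ext (Prod.ext h1 h)]
        exact Finset.mem_insert_self _ _
      · rw [show fl = ⟨(b, e), hb⟩ from Subtype.ext (Prod.ext h1 h)]
        exact Finset.mem_insert_of_mem (Finset.mem_singleton_self _)
    · intro hfl
      rcases Finset.mem_insert.mp hfl with hfl | hfl
      · rw [hfl]
      · rw [Finset.mem_singleton.mp hfl]
  rw [hset]; refine Finset.card_pair ?_
  exact fun h => hne (congrArg (fun fl : Flag ends => fl.1.1) h)

end Aux

/-- Proposition 5.1.  Let `G` be a loopless cubic graph, `e₀` a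
cut-edge with endpoint `v`, and `L` the subgraph induced by the vertices of the component
of `G − e₀` containing `v`.  If `π` is a star labelling of `G` whose exponent `w`
satisfies `Σ_{e' ∈ E(L)} w(e') = 2·|E(L)|`, then `π_v(e₀) = 1`.  In particular, any star
labelling of `G` whose exponent has average value `2` on each side of every cut-edge
assigns the label `1` to both flags of every cut-edge. -/
theorem statement10 (V E : Type) [Fintype V] [DecidableEq V] [Fintype E] [DecidableEq E]
    (ends : E → Sym2 V) (hloop : Loopless ends) (hcubic : ∀ v, deg ends v = 3) :
    (∀ (e₀ : E) (v : V) (hv : v ∈ ends e₀), IsCutEdge ends e₀ →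
      ∀ π : Flag ends → ℕ, IsStarLabelling ends π →
      (∑ᶠ e' ∈ {e' : E | ∀ u ∈ ends e', ReachAvoiding ends {e₀} v u},
          exponent ends π e')
        = 2 * {e' : E | ∀ u ∈ ends e', ReachAvoiding ends {e₀} v u}.ncard →
      π ⟨(v, e₀), hv⟩ = 1) ∧
    (∀ π : Flag ends → ℕ, IsStarLabelling ends π →
      (∀ (e₀ : E) (v : V), v ∈ ends e₀ → IsCutEdge ends e₀ →
        (∑ᶠ e' ∈ {e' : E | ∀ u ∈ ends e', ReachAvoiding ends {e₀} v u},
            exponent ends π e')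
          = 2 * {e' : E | ∀ u ∈ ends e', ReachAvoiding ends {e₀} v u}.ncard) →
      ∀ (e₀ : E), IsCutEdge ends e₀ → ∀ fl : Flag ends, fl.1.2 = e₀ → π fl = 1) := by
  classical
  have key : ∀ (e₀ : E) (v : V) (hv : v ∈ ends e₀), IsCutEdge ends e₀ →
      ∀ π : Flag ends → ℕ, IsStarLabelling ends π →
      (∑ᶠ e' ∈ {e' : E | ∀ u ∈ ends e', ReachAvoiding ends {e₀} v u},
          exponent ends π e')
        = 2 * {e' : E | ∀ u ∈ ends e', ReachAvoiding ends {e₀} v u}.ncard →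
      π ⟨(v, e₀), hv⟩ = 1 := by
    intro e₀ v hv hcut π hπ hsum
    set L : Finset E :=
      Finset.univ.filter (fun e' => ∀ u ∈ ends e', ReachAvoiding ends {e₀} v u) with hL
    have hsetL : {e' : E | ∀ u ∈ ends e', ReachAvoiding ends {e₀} v u} = ↑L := by
      ext e'; simp [hL]
    rw [hsetL, finsum_mem_coe_finset, Set.ncard_coe_finset] at hsum
    set S : Finset V := Finset.univ.filter (fun u => ReachAvoiding ends {e₀} v u) with hS
    set F : Finset (Flag ends) := Finset.univ.filter (fun fl => fl.1.1 ∈ S) with hF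
    obtain ⟨w, hw⟩ := Sym2.mem_iff_exists.mp hv
    have hwnot : ¬ ReachAvoiding ends {e₀} v w := hcut v w hw
    have hvS : v ∈ S := by
      simp only [hS, Finset.mem_filter, Finset.mem_univ, true_and]
      exact Relation.ReflTransGen.refl
    have hwS : w ∉ S := by
      simp only [hS, Finset.mem_filter, Finset.mem_univ, true_and]
      exact hwnot
    have hclosed : ∀ e' : E, e' ≠ e₀ → ∀ x ∈ ends e', x ∈ S → ∀ y ∈ ends e', y ∈ S := by
      intro e' hne x hx hxS y hy
      simp only [hS, Finset.mem_filter, Finset.mem_univ, true_and] at hxS ⊢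
      rcases eq_or_ne y x with rfl | hxy
      · exact hxS
      · refine hxS.tail ⟨e', by simpa using hne, ?_⟩
        obtain ⟨z, hz⟩ := Sym2.mem_iff_exists.mp hx
        rw [hz, Sym2.mem_iff] at hy
        rcases hy with rfl | rfl
        · exact absurd rfl hxy
        · exact hz
    have he₀L : e₀ ∉ L := by
      simp only [hL, Finset.mem_filter, Finset.mem_univ, true_and]
      push_neg
      exact ⟨w, by rw [hw]; exact Sym2.mem_mk_right _ _, hwnot⟩
    have hmaps : ∀ fl ∈ F, fl.1.2 ∈ insert e₀ L := by
      intro fl hfl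
      simp only [hF, Finset.mem_filter, Finset.mem_univ, true_and] at hfl
      by_cases h : fl.1.2 = e₀
      · simp [h]
      · refine Finset.mem_insert_of_mem ?_
        simp only [hL, Finset.mem_filter, Finset.mem_univ, true_and]
        intro u hu
        have := hclosed fl.1.2 h fl.1.1 fl.2 hfl u hu
        simpa only [hS, Finset.mem_filter, Finset.mem_univ, true_and] using this
    have hfiber_L : ∀ e' ∈ L, F.filter (fun fl => fl.1.2 = e')
        = Finset.univ.filter (fun fl : Flag ends => fl.1.2 = e') := by
      intro e' he'
      simp only [hL, Finset.mem_filter, Finset.mem_univ, true_and] at he'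
      ext fl
      simp only [hF, Finset.mem_filter, Finset.mem_univ, true_and]
      constructor
      · exact fun h => h.2
      · intro h
        refine ⟨?_, h⟩
        simp only [hS, Finset.mem_filter, Finset.mem_univ, true_and]
        exact he' fl.1.1 (h ▸ fl.2)
    have hfiber_e₀ : F.filter (fun fl => fl.1.2 = e₀) = {(⟨(v, e₀), hv⟩ : Flag ends)} := by
      ext fl
      simp only [hF, Finset.mem_filter, Finset.mem_univ, true_and, Finset.mem_singleton]
      refine Iff.trans ?_ Finset.mem_singleton.symm
      constructor
      · rintro ⟨hfS, hfe⟩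
        have hmem : fl.1.1 ∈ ends e₀ := hfe ▸ fl.2
        rw [hw, Sym2.mem_iff] at hmem
        rcases hmem with h1 | h1
        · exact Subtype.ext (Prod.ext h1 hfe)
        · rw [h1] at hfS; exact absurd hfS hwS
      · rintro rfl
        exact ⟨hvS, rfl⟩
    have hfiber_V : ∀ u ∈ S, F.filter (fun fl => fl.1.1 = u)
        = Finset.univ.filter (fun fl : Flag ends => fl.1.1 = u) := by
      intro u hu
      ext fl
      simp only [hF, Finset.mem_filter, Finset.mem_univ, true_and]
      constructor
      · exact fun h => h.2
      · intro h
        exact ⟨by rw [h]; exact hu, h⟩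
    have hFmapsV : ∀ fl ∈ F, fl.1.1 ∈ S := by
      intro fl hfl
      simpa only [hF, Finset.mem_filter, Finset.mem_univ, true_and] using hfl
    have hsumVc : ∑ u ∈ S, (∑ fl ∈ F.filter (fun fl => fl.1.1 = u), π fl)
        = ∑ _u ∈ S, 3 :=
      Finset.sum_congr rfl (fun u hu => by
        rw [hfiber_V u hu]; exact flagsAt_sum ends π hπ hcubic u)
    have hsumV : ∑ fl ∈ F, π fl = 3 * S.card := by
      rw [← Finset.sum_fiberwise_of_maps_to (g := fun fl : Flag ends => fl.1.1) hFmapsV π,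
        hsumVc, Finset.sum_const, smul_eq_mul, mul_comm]
    have hcardVc : ∑ u ∈ S, (F.filter (fun fl => fl.1.1 = u)).card
        = ∑ _u ∈ S, 3 :=
      Finset.sum_congr rfl (fun u hu => by rw [hfiber_V u hu, flagsAt_card, hcubic])
    have hcardV : F.card = 3 * S.card := by
      rw [Finset.card_eq_sum_card_fiberwise hFmapsV, hcardVc,
        Finset.sum_const, smul_eq_mul, mul_comm]
    have hsumE : ∑ fl ∈ F, π fl
        = (∑ e' ∈ L, exponent ends π e') + π ⟨(v, e₀), hv⟩ := by
      have hsumEc : ∑ e' ∈ L, (∑ fl ∈ F.filter (fun fl => fl.1.2 = e'), π fl)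
          = ∑ e' ∈ L, exponent ends π e' :=
        Finset.sum_congr rfl (fun e' he' => by rw [hfiber_L e' he']; rfl)
      erw [← Finset.sum_fiberwise_of_maps_to (g := fun fl : Flag ends => fl.1.2) hmaps π,
        Finset.sum_insert he₀L, hfiber_e₀, Finset.sum_singleton, hsumEc, add_comm]
    have hcardE : F.card = 2 * L.card + 1 := by
      have hcardEc : ∑ e' ∈ L, (F.filter (fun fl => fl.1.2 = e')).card
          = ∑ _e' ∈ L, 2 :=
        Finset.sum_congr rfl (fun e' he' => by
          rw [hfiber_L e' he']; exact flagsOf_card ends hloop e')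
      erw [Finset.card_eq_sum_card_fiberwise hmaps, Finset.sum_insert he₀L,
        hfiber_e₀, Finset.card_singleton, hcardEc, Finset.sum_const, smul_eq_mul]
      omega
    have h1 : 3 * S.card = 2 * L.card + π ⟨(v, e₀), hv⟩ := by
      rw [← hsumV, hsumE, hsum]
    omega
  refine ⟨key, ?_⟩
  intro π hπ havg e₀ hcut fl hfl
  obtain ⟨⟨u, e⟩, hm⟩ := fl
  dsimp only at hfl
  subst hfl
  exact key e (u) hm hcut π hπ (havg e u hm hcut)
end

section
/- Let G be a loopless cubic graph and let π be a star labelling of G whose exponent is the constant function 2. Then M_π := {e = uv ∈ E(G) : π_u(e) = π_v(e) = 1} is a perfect matching of G, and every vertex of G is incident with exactly two edges of D_π := E(G) − M_π (i.e., D_π is a 2-factor of G). -/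
open FLL

set_option linter.unusedSectionVars false

section Helpers
variable {V E : Type} [Fintype V] [DecidableEq V] [Fintype E] [DecidableEq E]
variable {ends : E → Sym2 V}

instance : DecidableEq (Flag ends) := fun a b =>
  decidable_of_iff (a.1 = b.1) Subtype.ext_iff.symm

lemma flagAt_card (v : V) :
    (Finset.univ.filter fun fl : Flag ends => fl.1.1 = v).card = deg ends v := by
  unfold deg
  apply Finset.card_bij (fun fl _ => fl.1.2)
  · rintro ⟨⟨a, e⟩, hmem⟩ hfl
    simp only [Finset.mem_filter, Finset.mem_univ, true_and] at hfl ⊢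
    have hfl : a = v := (Finset.mem_filter.mp hfl).2; subst hfl; exact hmem
  · rintro ⟨⟨a, e⟩, hm⟩ ha ⟨⟨b, f⟩, hm'⟩ hb h
    have ha : a = v := (Finset.mem_filter.mp ha).2; have hb : b = v := (Finset.mem_filter.mp hb).2
    simp only at h
    subst ha; subst hb; subst h; rfl
  · intro e he
    simp only [Finset.mem_filter, Finset.mem_univ, true_and] at he
    exact ⟨⟨(v, e), he⟩, Finset.mem_filter.mpr ⟨Finset.mem_univ _, rfl⟩, rfl⟩

lemma injOn_pi (π : Flag ends → ℕ) (hπ : IsStarLabelling ends π) (v : V) :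
    Set.InjOn π {fl : Flag ends | fl.1.1 = v} := by
  have h := hπ v
  have hcard : ((Finset.univ.filter fun fl : Flag ends => fl.1.1 = v).image π).card
      = (Finset.univ.filter fun fl : Flag ends => fl.1.1 = v).card := by
    rw [h, Finset.card_range, flagAt_card]
  have := Finset.card_image_iff.mp hcard
  simpa using this

lemma edge_flags (hloop : Loopless ends) (e : E) :
    ∃ (u w : V) (hu : u ∈ ends e) (hw : w ∈ ends e), u ≠ w ∧
      (Finset.univ.filter fun fl : Flag ends => fl.1.2 = e)
        = {(⟨(u, e), hu⟩ : Flag ends), (⟨(w, e), hw⟩ : Flag ends)} := by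
  obtain ⟨⟨u, w⟩, h⟩ := Quot.exists_rep (ends e)
  have he : ends e = s(u, w) := h.symm
  have hu : u ∈ ends e := by rw [he]; exact Sym2.mem_mk_left u w
  have hw : w ∈ ends e := by rw [he]; exact Sym2.mem_mk_right u w
  have hne : u ≠ w := by
    intro hq; apply hloop e; rw [he, Sym2.mk_isDiag_iff]; exact hq
  refine ⟨u, w, hu, hw, hne, ?_⟩
  ext fl
  obtain ⟨⟨a, f⟩, hmem⟩ := fl
  refine (Finset.mem_filter.trans ?_).trans (Finset.mem_insert.trans (or_congr_right Finset.mem_singleton)).symm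
  refine (and_iff_right (Finset.mem_univ _)).trans (show f = e ↔ _ from ?_)
  constructor
  · rintro rfl
    have : a ∈ ends f := hmem
    rw [he, Sym2.mem_iff] at this
    rcases this with rfl | rfl
    · exact Or.inl rfl
    · exact Or.inr rfl
  · intro h
    rcases h with h | h <;> exact congrArg (fun x : Flag ends => x.1.2) h

lemma flag_sum (hloop : Loopless ends) (π : Flag ends → ℕ)
    (hexp : ∀ e, exponent ends π e = 2) (e : E)
    (fl fl' : Flag ends) (hfe : fl.1.2 = e) (hfe' : fl'.1.2 = e) (hne : fl ≠ fl') :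
    π fl + π fl' = 2 := by
  obtain ⟨u, w, hu, hw, huw, hset⟩ := edge_flags hloop e
  have h2 := hexp e
  rw [exponent, hset] at h2
  have hAB : (⟨(u, e), hu⟩ : Flag ends) ≠ ⟨(w, e), hw⟩ := by
    intro hq; apply huw; exact congrArg (fun x : Flag ends => x.1.1) hq
  have key : ∑ g ∈ ({(⟨(u, e), hu⟩ : Flag ends), ⟨(w, e), hw⟩} : Finset (Flag ends)), π g
      = π ⟨(u, e), hu⟩ + π ⟨(w, e), hw⟩ := Finset.sum_pair hAB
  have h2 : _ = 2 := key.symm.trans h2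
  have hfl : fl ∈ (Finset.univ.filter fun g : Flag ends => g.1.2 = e) := Finset.mem_filter.mpr ⟨Finset.mem_univ _, hfe⟩
  have hfl' : fl' ∈ (Finset.univ.filter fun g : Flag ends => g.1.2 = e) := Finset.mem_filter.mpr ⟨Finset.mem_univ _, hfe'⟩
  rw [hset] at hfl hfl'
  have hfl := (Finset.mem_insert.mp hfl).imp_right Finset.mem_singleton.mp
  have hfl' := (Finset.mem_insert.mp hfl').imp_right Finset.mem_singleton.mp
  rcases hfl with rfl | rfl <;> rcases hfl' with rfl | rfl
  · exact absurd rfl hne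
  · exact h2
  · omega
  · exact absurd rfl hne


lemma mem_Mpi_of_flag_one (hloop : Loopless ends) (π : Flag ends → ℕ)
    (hexp : ∀ e, exponent ends π e = 2) (fl : Flag ends) (h1 : π fl = 1) :
    fl.1.2 ∈ Mpi ends π := by
  intro fl' hfl'
  by_cases hq : fl' = fl
  · rw [hq, h1]
  · have := flag_sum hloop π hexp fl.1.2 fl fl' rfl hfl' (Ne.symm hq)
    omega

lemma exists_one_flag (π : Flag ends → ℕ) (hπ : IsStarLabelling ends π)
    (hcubic : ∀ v, deg ends v = 3) (v : V) :
    ∃ fl : Flag ends, fl.1.1 = v ∧ π fl = 1 := by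
  have h := hπ v
  have : (1 : ℕ) ∈ Finset.range (deg ends v) := by rw [hcubic v]; simp
  rw [← h, Finset.mem_image] at this
  obtain ⟨fl, hmem, hval⟩ := this
  exact ⟨fl, (Finset.mem_filter.mp hmem).2, hval⟩

theorem statement11' (ends : E → Sym2 V) (hloop : Loopless ends)
    (hcubic : ∀ v, deg ends v = 3)
    (π : Flag ends → ℕ) (hπ : IsStarLabelling ends π)
    (hexp : ∀ e, exponent ends π e = 2) :
    (∀ e ∈ Mpi ends π, ∀ e' ∈ Mpi ends π, e ≠ e' → ∀ v : V, v ∈ ends e → v ∉ ends e') ∧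
    (∀ v : V, ∃ e ∈ Mpi ends π, v ∈ ends e) ∧
    (∀ v : V, {e : E | e ∉ Mpi ends π ∧ v ∈ ends e}.ncard = 2) := by
  have hinj := injOn_pi π hπ
  have disj : ∀ e ∈ Mpi ends π, ∀ e' ∈ Mpi ends π, e ≠ e' →
      ∀ v : V, v ∈ ends e → v ∉ ends e' := by
    intro e he e' he' hne v hv hv'
    have h1 : π ⟨(v, e), hv⟩ = 1 := he _ rfl
    have h2 : π ⟨(v, e'), hv'⟩ = 1 := he' _ rfl
    have := hinj v rfl rfl (h1.trans h2.symm)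
    exact hne (congrArg (fun x : Flag ends => x.1.2) this)
  refine ⟨disj, ?_, ?_⟩
  · intro v
    obtain ⟨fl, hv, h1⟩ := exists_one_flag π hπ hcubic v
    exact ⟨fl.1.2, mem_Mpi_of_flag_one hloop π hexp fl h1, hv ▸ fl.2⟩
  · intro v
    obtain ⟨fl, hv, h1⟩ := exists_one_flag π hπ hcubic v
    set e₀ := fl.1.2 with he₀
    have he₀M : e₀ ∈ Mpi ends π := mem_Mpi_of_flag_one hloop π hexp fl h1
    have hve₀ : v ∈ ends e₀ := hv ▸ fl.2
    have hset : {e : E | e ∉ Mpi ends π ∧ v ∈ ends e}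
        = ↑((Finset.univ.filter fun e => v ∈ ends e).erase e₀) := by
      ext e
      simp only [Set.mem_setOf_eq, Finset.coe_erase, Set.mem_diff,
        Finset.coe_filter, Finset.mem_univ, true_and, Set.mem_setOf_eq,
        Set.mem_singleton_iff]
      constructor
      · rintro ⟨heM, hve⟩
        exact ⟨hve, fun hq => heM (hq ▸ he₀M)⟩
      · rintro ⟨hve, hne⟩
        refine ⟨fun heM => ?_, hve⟩
        exact disj e heM e₀ he₀M hne v hve hve₀
    rw [hset, Set.ncard_coe_finset, Finset.card_erase_of_mem (by simp [hve₀])]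
    have : (Finset.univ.filter fun e => v ∈ ends e).card = 3 := hcubic v
    omega

end Helpers


/-- Let `G` be a loopless cubic graph and `π` a star labelling of `G`
whose exponent is constantly `2`.  Then `M_π = {e = uv : π_u(e) = π_v(e) = 1}` is a
perfect matching of `G` (pairwise disjoint edges covering every vertex), and every vertex
is incident with exactly two edges of `D_π = E(G) − M_π`. -/
theorem statement11 (V E : Type) [Fintype V] [DecidableEq V] [Fintype E] [DecidableEq E]
    (ends : E → Sym2 V) (hloop : Loopless ends) (hcubic : ∀ v, deg ends v = 3)
    (π : Flag ends → ℕ) (hπ : IsStarLabelling ends π)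
    (hexp : ∀ e, exponent ends π e = 2) :
    (∀ e ∈ Mpi ends π, ∀ e' ∈ Mpi ends π, e ≠ e' → ∀ v : V, v ∈ ends e → v ∉ ends e') ∧
    (∀ v : V, ∃ e ∈ Mpi ends π, v ∈ ends e) ∧
    (∀ v : V, {e : E | e ∉ Mpi ends π ∧ v ∈ ends e}.ncard = 2) := by
  exact statement11' ends hloop hcubic π hπ hexp
end

section
/- Let G be a loopless cubic graph with b ≥ 1 cut-edges in which every connected component contains exactly one cut-edge, and call each connected component of G minus its cut-edges a leaf block (there are exactly 2b of them, and each has every vertex of degree 3 except exactly one vertex of degree 2). Then: (i) a connected loopless graph in which every vertex has degree 3 except exactly one vertex of degree 2 admits no proper 3-edge colouring; (ii) if G is f-edge choosable for some f : E(G) → ℕ, then every leaf block of G contains at least one edge e with f(e) ≥ 4; consequently every f for which G is f-edge choosable has at least 2b edges e with f(e) ≥ 4. -/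
namespace FLL

variable {V E : Type}

instance (ends : E → Sym2 V) [DecidableEq V] [DecidableEq E] :
    DecidableEq (Flag ends) := Subtype.instDecidableEq

/-- Connectivity of the multigraph. -/
def ConnectedG (ends : E → Sym2 V) : Prop :=
  ∀ u v : V, ReachAvoiding ends ∅ u v

/-- A planar embedding of a loopless multigraph: vertices are points of the plane,
edges are arcs between the endpoints, internally disjoint from each other
and from the vertices. -/
structure PlanarEmbedding (ends : E → Sym2 V) where
  vpos : V → ℝ × ℝ
  vinj : Function.Injective vpos
  arc : E → ℝ → ℝ × ℝ
  arc_cont : ∀ e, ContinuousOn (arc e) (Set.Icc 0 1)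
  arc_inj : ∀ e, Set.InjOn (arc e) (Set.Icc 0 1)
  arc_ends : ∀ e, Sym2.map vpos (ends e) = s(arc e 0, arc e 1)
  arc_avoid : ∀ e, ∀ t ∈ Set.Ioo (0:ℝ) 1, ∀ v, arc e t ≠ vpos v
  arc_disjoint : ∀ e e', e ≠ e' → ∀ t ∈ Set.Ioo (0:ℝ) 1, ∀ t' ∈ Set.Ioo (0:ℝ) 1,
    arc e t ≠ arc e' t'

end FLL

namespace FLLAux
open FLL Finset

set_option linter.unusedSectionVars false
set_option maxHeartbeats 1000000

variable {V E : Type} [Fintype V] [DecidableEq V] [Fintype E] [DecidableEq E]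

lemma reach_symm {ends : E → Sym2 V} {X : Set E} : Symmetric (ReachAvoiding ends X) :=
  fun _a _b hr => by
    unfold ReachAvoiding at hr ⊢
    induction hr with
    | refl => exact Relation.ReflTransGen.refl
    | tail _ hbc ih =>
      obtain ⟨e, he, hx⟩ := hbc
      exact Relation.ReflTransGen.head ⟨e, he, by rw [hx, Sym2.eq_swap]⟩ ih

lemma reach_mono {ends : E → Sym2 V} {X Y : Set E} (h : X ⊆ Y) {u v : V} :
    ReachAvoiding ends Y u v → ReachAvoiding ends X u v :=
  fun hr => by
    unfold ReachAvoiding at hr ⊢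
    induction hr with
    | refl => exact Relation.ReflTransGen.refl
    | tail _ hbc ih =>
      obtain ⟨e, he, hx⟩ := hbc
      exact ih.tail ⟨e, fun hX => he (h hX), hx⟩

lemma ncard_filter_eq {α : Type} [Fintype α] (p : α → Prop) [DecidablePred p] :
    {e : α | p e}.ncard = (univ.filter p).card := by
  rw [Set.ncard_eq_toFinset_card', Set.toFinset_setOf]

lemma card_filter_mem_sym2 {s : Sym2 V} (hs : ¬ s.IsDiag) (A : Finset V)
    (hA : ∀ u ∈ s, u ∈ A) : (A.filter (fun u => u ∈ s)).card = 2 := by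
  induction s using Sym2.inductionOn with
  | hf a b =>
    have hab : a ≠ b := by simpa using hs
    have : A.filter (fun u => u ∈ s(a, b)) = {a, b} := by
      ext u
      simp only [mem_filter, Sym2.mem_iff, mem_insert, mem_singleton]
      constructor
      · rintro ⟨_, h⟩; exact h
      · rintro (rfl | rfl)
        · exact ⟨hA u (Sym2.mem_mk_left _ _), Or.inl rfl⟩
        · exact ⟨hA u (Sym2.mem_mk_right _ _), Or.inr rfl⟩
    rw [this, card_pair hab]

lemma sum_deg (ends : E → Sym2 V) (A : Finset V) (S : Finset E)
    [DecidablePred fun p : V × E => p.1 ∈ ends p.2]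
    (h2 : ∀ e ∈ S, (A.filter (fun u => u ∈ ends e)).card = 2) :
    ∑ u ∈ A, (S.filter (fun e => u ∈ ends e)).card = 2 * S.card := by
  classical
  have h0 : ∀ u ∈ A, (S.filter (fun e => u ∈ ends e)).card
      = ∑ e ∈ S, if u ∈ ends e then 1 else 0 := fun u _ => by
    rw [card_filter]
  rw [Finset.sum_congr rfl h0, Finset.sum_comm]
  have h1 : ∀ e ∈ S, (∑ u ∈ A, if u ∈ ends e then 1 else 0) = 2 := fun e he => by
    rw [← card_filter]; exact h2 e he
  rw [Finset.sum_congr rfl h1, Finset.sum_const, smul_eq_mul, mul_comm]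

lemma core (ends : E → Sym2 V) (A : Finset V) (S : Finset E)
    (hloop : ∀ e ∈ S, ¬ (ends e).IsDiag)
    (hends : ∀ e ∈ S, ∀ u ∈ ends e, u ∈ A)
    (x₀ : V) (hx₀ : x₀ ∈ A)
    (hdeg2 : (S.filter (fun e => x₀ ∈ ends e)).card = 2)
    (hdeg3 : ∀ u ∈ A, u ≠ x₀ → (S.filter (fun e => u ∈ ends e)).card = 3)
    (c : E → ℕ)
    (hc : ∀ e e', e ≠ e' → (∃ v, v ∈ ends e ∧ v ∈ ends e') → c e ≠ c e')
    (hlt : ∀ e ∈ S, c e < 3) : False := by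
  classical
  have h2 : ∀ e ∈ S, (A.filter (fun u => u ∈ ends e)).card = 2 :=
    fun e he => card_filter_mem_sym2 (hloop e he) A (hends e he)
  have hsum : ∑ u ∈ A, (S.filter (fun e => u ∈ ends e)).card = 2 * S.card :=
    sum_deg ends A S h2
  have hsum2 : ∑ u ∈ A, (S.filter (fun e => u ∈ ends e)).card
      = 3 * (A.card - 1) + 2 := by
    rw [← Finset.sum_erase_add A _ hx₀, hdeg2]
    congr 1
    rw [Finset.sum_congr rfl (fun u hu => hdeg3 u (Finset.mem_of_mem_erase hu)
      (Finset.ne_of_mem_erase hu)), Finset.sum_const, smul_eq_mul,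
      Finset.card_erase_of_mem hx₀, mul_comm]
  have injOn : ∀ u : V, ∀ e ∈ S.filter (fun e => u ∈ ends e),
      ∀ e' ∈ S.filter (fun e => u ∈ ends e), c e = c e' → e = e' := by
    intro u e he e' he' hcc
    by_contra hne
    exact hc e e' hne ⟨u, (mem_filter.mp he).2, (mem_filter.mp he').2⟩ hcc
  have hx₀edge : ∃ e ∈ S, x₀ ∈ ends e := by
    have : (S.filter (fun e => x₀ ∈ ends e)).Nonempty := by
      rw [← Finset.card_pos, hdeg2]; norm_num
    obtain ⟨e, he⟩ := this
    exact ⟨e, (mem_filter.mp he).1, (mem_filter.mp he).2⟩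
  obtain ⟨estar, hestarS, hestarx⟩ := hx₀edge
  set k := c estar with hk
  have hk3 : k < 3 := hlt _ hestarS
  have key : ∀ u ∈ A, ((S.filter (fun e => u ∈ ends e)).filter (fun e => c e = k)).card = 1 := by
    intro u hu
    set T := S.filter (fun e => u ∈ ends e) with hT
    have hinj : Set.InjOn c T := fun e he e' he' h => injOn u e he e' he' h
    have hex : ∃ e ∈ T, c e = k := by
      by_cases hux : u = x₀
      · subst hux
        exact ⟨estar, mem_filter.mpr ⟨hestarS, hestarx⟩, rfl⟩
      · have hT3 : T.card = 3 := hdeg3 u hu hux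
        have himg : T.image c ⊆ Finset.range 3 := by
          intro x hx
          obtain ⟨e, he, rfl⟩ := Finset.mem_image.mp hx
          exact Finset.mem_range.mpr (hlt e (mem_filter.mp he).1)
        have hcardimg : (T.image c).card = 3 := by
          rw [Finset.card_image_of_injOn hinj, hT3]
        have himgeq : T.image c = Finset.range 3 :=
          Finset.eq_of_subset_of_card_le himg (by rw [hcardimg, Finset.card_range])
        have : k ∈ T.image c := by rw [himgeq]; exact Finset.mem_range.mpr hk3
        obtain ⟨e, he, hce⟩ := Finset.mem_image.mp this
        exact ⟨e, he, hce⟩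
    obtain ⟨e, heT, hce⟩ := hex
    rw [Finset.card_eq_one]
    refine ⟨e, ?_⟩
    ext e'
    simp only [Finset.mem_filter, Finset.mem_singleton]
    constructor
    · rintro ⟨he'T, hce'⟩
      exact injOn u e' he'T e heT (hce'.trans hce.symm)
    · rintro rfl; exact ⟨heT, hce⟩
  set M := S.filter (fun e => c e = k) with hM
  have hMfilter : ∀ u : V, M.filter (fun e => u ∈ ends e)
      = (S.filter (fun e => u ∈ ends e)).filter (fun e => c e = k) := by
    intro u
    rw [Finset.filter_filter, Finset.filter_filter]
    exact Finset.filter_congr (fun e _ => by tauto)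
  have hsumM : ∑ u ∈ A, (M.filter (fun e => u ∈ ends e)).card = 2 * M.card := by
    refine sum_deg ends A M (fun e he => ?_)
    have heS := Finset.mem_of_mem_filter e he
    exact h2 e heS
  have hsumM2 : ∑ u ∈ A, (M.filter (fun e => u ∈ ends e)).card = A.card := by
    have h1 : ∀ u ∈ A, (M.filter (fun e => u ∈ ends e)).card = 1 := fun u hu => by
      rw [hMfilter u]; exact key u hu
    rw [Finset.sum_congr rfl h1, Finset.sum_const, smul_eq_mul, mul_one]
  have h1 : A.card = 2 * M.card := by rw [← hsumM2, hsumM]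
  have h3 : 3 * (A.card - 1) + 2 = 2 * S.card := by rw [← hsum2, hsum]
  have hA1 : 1 ≤ A.card := Finset.card_pos.mpr ⟨x₀, hx₀⟩
  omega

section Struct
variable {ends : E → Sym2 V}

lemma cut_unique
    (hone : ∀ v : V, {e : E | IsCutEdge ends e ∧
      ∃ u ∈ ends e, ReachAvoiding ends ∅ v u}.ncard = 1)
    (v : V) {e e' : E} (he : IsCutEdge ends e) (he' : IsCutEdge ends e')
    (hu : ∃ u ∈ ends e, ReachAvoiding ends ∅ v u)
    (hu' : ∃ u ∈ ends e', ReachAvoiding ends ∅ v u) : e = e' := by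
  obtain ⟨a, ha⟩ := Set.ncard_eq_one.mp (hone v)
  have h1 : e ∈ ({a} : Set E) := ha ▸ (⟨he, hu⟩ : e ∈ {e : E | IsCutEdge ends e ∧
      ∃ u ∈ ends e, ReachAvoiding ends ∅ v u})
  have h2 : e' ∈ ({a} : Set E) := ha ▸ (⟨he', hu'⟩ : e' ∈ {e : E | IsCutEdge ends e ∧
      ∃ u ∈ ends e, ReachAvoiding ends ∅ v u})
  rw [Set.mem_singleton_iff] at h1 h2
  rw [h1, h2]

lemma exists_block_cutflag
    (hone : ∀ v : V, {e : E | IsCutEdge ends e ∧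
      ∃ u ∈ ends e, ReachAvoiding ends ∅ v u}.ncard = 1)
    (v : V) :
    ∃ x e, IsCutEdge ends e ∧ x ∈ ends e ∧
      ReachAvoiding ends {e' | IsCutEdge ends e'} v x := by
  obtain ⟨a, ha⟩ := Set.ncard_eq_one.mp (hone v)
  have haa : a ∈ {e : E | IsCutEdge ends e ∧ ∃ u ∈ ends e, ReachAvoiding ends ∅ v u} := by
    rw [ha]; rfl
  obtain ⟨hacut, u, hu, hru⟩ := haa
  have key : ∀ w : V, ReachAvoiding ends ∅ v w →
      (ReachAvoiding ends {e' | IsCutEdge ends e'} v w ∨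
       ∃ x e, IsCutEdge ends e ∧ x ∈ ends e ∧
         ReachAvoiding ends {e' | IsCutEdge ends e'} v x) := by
    intro w hw
    induction hw with
    | refl => exact Or.inl Relation.ReflTransGen.refl
    | @tail b u' hvb hbu ih =>
      obtain ⟨g, -, hg⟩ := hbu
      rcases ih with h | h
      · by_cases hcg : IsCutEdge ends g
        · exact Or.inr ⟨b, g, hcg, by rw [hg]; exact Sym2.mem_mk_left _ _, h⟩
        · exact Or.inl (h.tail ⟨g, hcg, hg⟩)
      · exact Or.inr h
  rcases key u hru with h | h
  · exact ⟨u, a, hacut, hu, h⟩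
  · exact h

lemma cut_not_reach {e : E} {x y : V} (hc : IsCutEdge ends e) (heq : ends e = s(x, y)) :
    ¬ ReachAvoiding ends {e' | IsCutEdge ends e'} x y := fun hr =>
  hc x y heq (reach_mono (by intro z hz; rw [Set.mem_singleton_iff] at hz; rw [hz]; exact hc) hr)

lemma cutdeg_le_one
    (hone : ∀ v : V, {e : E | IsCutEdge ends e ∧
      ∃ u ∈ ends e, ReachAvoiding ends ∅ v u}.ncard = 1)
    (u : V) : {e : E | IsCutEdge ends e ∧ u ∈ ends e}.ncard ≤ 1 := by
  obtain ⟨a, ha⟩ := Set.ncard_eq_one.mp (hone u)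
  have hsub : {e : E | IsCutEdge ends e ∧ u ∈ ends e} ⊆ {a} := by
    intro e ⟨hc, hm⟩
    rw [← ha]
    exact ⟨hc, u, hm, Relation.ReflTransGen.refl⟩
  calc {e : E | IsCutEdge ends e ∧ u ∈ ends e}.ncard
      ≤ ({a} : Set E).ncard := Set.ncard_le_ncard hsub (Set.finite_singleton a)
    _ = 1 := Set.ncard_singleton a

lemma deg_split (hcubic : ∀ v, deg ends v = 3) (u : V) :
    {e : E | ¬ IsCutEdge ends e ∧ u ∈ ends e}.ncard
      + {e : E | IsCutEdge ends e ∧ u ∈ ends e}.ncard = 3 := by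
  classical
  rw [ncard_filter_eq, ncard_filter_eq]
  have h1 : (univ.filter (fun e => ¬ IsCutEdge ends e ∧ u ∈ ends e))
      = (univ.filter (fun e => u ∈ ends e)).filter (fun e => ¬ IsCutEdge ends e) := by
    rw [Finset.filter_filter]
    exact Finset.filter_congr (fun e _ => by tauto)
  have h2 : (univ.filter (fun e => IsCutEdge ends e ∧ u ∈ ends e))
      = (univ.filter (fun e => u ∈ ends e)).filter (fun e => IsCutEdge ends e) := by
    rw [Finset.filter_filter]
    exact Finset.filter_congr (fun e _ => by tauto)
  rw [h1, h2, add_comm, Finset.card_filter_add_card_filter_not]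
  exact hcubic u

variable (hcubic : ∀ v, deg ends v = 3)
  (hone : ∀ v : V, {e : E | IsCutEdge ends e ∧
      ∃ u ∈ ends e, ReachAvoiding ends ∅ v u}.ncard = 1)
include hcubic hone

lemma blockdeg_eq (u : V) :
    ({e : E | ¬ IsCutEdge ends e ∧ u ∈ ends e}.ncard = 3 ∧
      ¬ ∃ e, IsCutEdge ends e ∧ u ∈ ends e) ∨
    ({e : E | ¬ IsCutEdge ends e ∧ u ∈ ends e}.ncard = 2 ∧
      ∃ e, IsCutEdge ends e ∧ u ∈ ends e) := by
  have hs := deg_split hcubic u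
  have hle := cutdeg_le_one hone u
  set t := {e : E | IsCutEdge ends e ∧ u ∈ ends e}
  by_cases h : ∃ e, IsCutEdge ends e ∧ u ∈ ends e
  · right
    have : t.ncard ≠ 0 := by
      obtain ⟨e, he⟩ := h
      have hfin : t.Finite := Set.toFinite t
      have hpos : 0 < t.ncard := (Set.ncard_pos hfin).mpr ⟨e, he⟩
      omega
    constructor
    · omega
    · exact h
  · left
    have : t = ∅ := by
      ext e; simp only [Set.mem_empty_iff_false, iff_false]
      intro he; exact h ⟨e, he⟩
    rw [this, Set.ncard_empty] at hs
    exact ⟨by omega, h⟩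

lemma exists_unique_deg2 (v₀ : V) :
    ∃! u : V, ReachAvoiding ends {e | IsCutEdge ends e} v₀ u ∧
      {e : E | ¬ IsCutEdge ends e ∧ u ∈ ends e}.ncard = 2 := by
  obtain ⟨x, e₀, he₀cut, hxe₀, hreach⟩ := exists_block_cutflag hone v₀
  refine ⟨x, ⟨hreach, ?_⟩, ?_⟩
  · rcases blockdeg_eq hcubic hone x with ⟨-, hno⟩ | ⟨h2, -⟩
    · exact absurd ⟨e₀, he₀cut, hxe₀⟩ hno
    · exact h2
  · rintro u ⟨hu_reach, hu2⟩
    have hcute : ∃ e, IsCutEdge ends e ∧ u ∈ ends e := by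
      rcases blockdeg_eq hcubic hone u with ⟨h3, -⟩ | ⟨-, h⟩
      · omega
      · exact h
    obtain ⟨e, hecut, hue⟩ := hcute
    have he : e = e₀ :=
      cut_unique hone v₀ hecut he₀cut
        ⟨u, hue, reach_mono (Set.empty_subset _) hu_reach⟩
        ⟨x, hxe₀, reach_mono (Set.empty_subset _) hreach⟩
    subst he
    by_contra hne
    have hsy : ends e = s(u, x) := (Sym2.mem_and_mem_iff hne).mp ⟨hue, hxe₀⟩
    exact cut_not_reach hecut hsy ((reach_symm hu_reach).trans hreach)

end Struct

section QuotCount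
variable {ends : E → Sym2 V}

lemma quot_eq_of_reach {u v : V}
    (h : ReachAvoiding ends {e | IsCutEdge ends e} u v) :
    Quot.mk (fun u v : V => ∃ e, ¬ IsCutEdge ends e ∧ ends e = s(u, v)) u
      = Quot.mk _ v := by
  induction h with
  | refl => rfl
  | @tail b c _ hbc ih =>
    obtain ⟨e, he, heq⟩ := hbc
    exact ih.trans (Quot.sound ⟨e, he, heq⟩)

lemma reach_of_eqvgen {u v : V}
    (h : Relation.EqvGen (fun u v : V => ∃ e, ¬ IsCutEdge ends e ∧ ends e = s(u, v)) u v) :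
    ReachAvoiding ends {e | IsCutEdge ends e} u v := by
  induction h with
  | rel a b hab =>
    obtain ⟨e, he, heq⟩ := hab
    exact Relation.ReflTransGen.single ⟨e, he, heq⟩
  | refl a => exact Relation.ReflTransGen.refl
  | symm a b _ ih => exact reach_symm ih
  | trans a b c _ _ ih1 ih2 => exact ih1.trans ih2

lemma flag_eq
    (hone : ∀ v : V, {e : E | IsCutEdge ends e ∧
      ∃ u ∈ ends e, ReachAvoiding ends ∅ v u}.ncard = 1)
    {x x' : V} {e e' : E} (he : IsCutEdge ends e) (hx : x ∈ ends e)
    (he' : IsCutEdge ends e') (hx' : x' ∈ ends e')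
    (hr : ReachAvoiding ends {e'' | IsCutEdge ends e''} x x') : x = x' ∧ e = e' := by
  have hee' : e = e' :=
    cut_unique hone x he he' ⟨x, hx, Relation.ReflTransGen.refl⟩
      ⟨x', hx', reach_mono (Set.empty_subset _) hr⟩
  subst hee'
  refine ⟨?_, rfl⟩
  by_contra hne
  exact cut_not_reach he ((Sym2.mem_and_mem_iff hne).mp ⟨hx, hx'⟩) hr

lemma card_F (hloop : Loopless ends) :
    Nat.card {p : V × E // IsCutEdge ends p.2 ∧ p.1 ∈ ends p.2}
      = 2 * {e : E | IsCutEdge ends e}.ncard := by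
  classical
  have hcoe : Nat.card {p : V × E // IsCutEdge ends p.2 ∧ p.1 ∈ ends p.2}
      = {p : V × E | IsCutEdge ends p.2 ∧ p.1 ∈ ends p.2}.ncard :=
    Nat.card_coe_set_eq _
  rw [hcoe]
  have hP : {p : V × E | IsCutEdge ends p.2 ∧ p.1 ∈ ends p.2}.ncard
      = (univ.filter (fun p : V × E => IsCutEdge ends p.2 ∧ p.1 ∈ ends p.2)).card := by
    rw [Set.ncard_eq_toFinset_card', Set.toFinset_setOf]
  have hb : {e : E | IsCutEdge ends e}.ncard
      = (univ.filter (fun e => IsCutEdge ends e)).card := by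
    rw [Set.ncard_eq_toFinset_card', Set.toFinset_setOf]
  rw [hP, hb]
  set P := fun p : V × E => IsCutEdge ends p.2 ∧ p.1 ∈ ends p.2 with hPdef
  have hfib : (univ.filter P).card
      = ∑ e ∈ univ.filter (fun e => IsCutEdge ends e),
          ((univ.filter P).filter (fun p => p.2 = e)).card := by
    refine Finset.card_eq_sum_card_fiberwise (fun p hp => ?_)
    rw [mem_coe, mem_filter] at hp ⊢
    exact ⟨mem_univ _, hp.2.1⟩
  rw [hfib]
  have hfib2 : ∀ e ∈ univ.filter (fun e => IsCutEdge ends e),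
      ((univ.filter P).filter (fun p => p.2 = e)).card = 2 := by
    intro e he
    rw [mem_filter] at he
    have himg : (univ.filter P).filter (fun p => p.2 = e)
        = (univ.filter (fun x : V => x ∈ ends e)).image (fun x => (x, e)) := by
      ext ⟨x, e'⟩
      simp only [mem_filter, mem_univ, true_and, mem_image, Prod.mk.injEq, hPdef]
      constructor
      · rintro ⟨⟨-, hx⟩, rfl⟩
        exact ⟨x, hx, rfl, rfl⟩
      · rintro ⟨a, ha, rfl, rfl⟩
        exact ⟨⟨he.2, ha⟩, rfl⟩
    rw [himg, Finset.card_image_of_injective _ (fun a b hab => (Prod.mk.injEq _ _ _ _ ▸ hab).1),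
      card_filter_mem_sym2 (hloop e) univ (fun u _ => mem_univ u)]
  rw [Finset.sum_congr rfl hfib2, Finset.sum_const, smul_eq_mul, mul_comm]

lemma blocks_bij
    (hone : ∀ v : V, {e : E | IsCutEdge ends e ∧
      ∃ u ∈ ends e, ReachAvoiding ends ∅ v u}.ncard = 1) :
    Function.Bijective (fun p : {p : V × E // IsCutEdge ends p.2 ∧ p.1 ∈ ends p.2} =>
      Quot.mk (fun u v : V => ∃ e, ¬ IsCutEdge ends e ∧ ends e = s(u, v)) p.1.1) := by
  constructor
  · rintro ⟨⟨x, e⟩, hxe⟩ ⟨⟨x', e'⟩, hx'e'⟩ hq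
    simp only at hq
    have heqv := Quot.eq.mp hq
    have hxx' : ReachAvoiding ends {e | IsCutEdge ends e} x x' := reach_of_eqvgen heqv
    obtain ⟨rfl, rfl⟩ := flag_eq hone hxe.1 hxe.2 hx'e'.1 hx'e'.2 hxx'
    rfl
  · intro q
    induction q using Quot.ind with
    | _ v =>
      obtain ⟨x, e, hecut, hxe, hreach⟩ := exists_block_cutflag hone v
      exact ⟨⟨(x, e), hecut, hxe⟩, (quot_eq_of_reach (reach_symm hreach))⟩

lemma count_blocks (hloop : Loopless ends)
    (hone : ∀ v : V, {e : E | IsCutEdge ends e ∧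
      ∃ u ∈ ends e, ReachAvoiding ends ∅ v u}.ncard = 1) :
    Nat.card (Quot (fun u v : V => ∃ e, ¬ IsCutEdge ends e ∧ ends e = s(u, v)))
      = 2 * {e : E | IsCutEdge ends e}.ncard := by
  rw [← Nat.card_eq_of_bijective _ (blocks_bij hone)]
  exact card_F hloop

end QuotCount

section Choose
variable {ends : E → Sym2 V}

lemma filter_block_edges {v : V} {u : V}
    (hu : ReachAvoiding ends {e | IsCutEdge ends e} v u)
    [DecidablePred fun e => ¬ IsCutEdge ends e ∧
        ∀ w ∈ ends e, ReachAvoiding ends {e' | IsCutEdge ends e'} v w]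
    [DecidablePred fun e : E => u ∈ ends e]
    [DecidablePred fun e => ¬ IsCutEdge ends e ∧ u ∈ ends e] :
    (univ.filter (fun e => ¬ IsCutEdge ends e ∧
        ∀ w ∈ ends e, ReachAvoiding ends {e' | IsCutEdge ends e'} v w)).filter
      (fun e => u ∈ ends e)
    = univ.filter (fun e => ¬ IsCutEdge ends e ∧ u ∈ ends e) := by
  ext e
  simp only [mem_filter, mem_univ, true_and]
  constructor
  · rintro ⟨⟨hnc, -⟩, hue⟩
    exact ⟨hnc, hue⟩
  · rintro ⟨hnc, hue⟩
    refine ⟨⟨hnc, fun w hw => ?_⟩, hue⟩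
    obtain ⟨y, hy⟩ := Sym2.mem_iff_exists.mp hue
    rcases Sym2.mem_iff.mp (hy ▸ hw) with rfl | rfl
    · exact hu
    · exact hu.tail ⟨e, hnc, hy⟩

lemma block_has_big_edge (hloop : Loopless ends) (hcubic : ∀ v, deg ends v = 3)
    (hone : ∀ v : V, {e : E | IsCutEdge ends e ∧
      ∃ u ∈ ends e, ReachAvoiding ends ∅ v u}.ncard = 1)
    (f : E → ℕ) (hch : EdgeChoosable ends f) (v : V) :
    ∃ e : E, ¬ IsCutEdge ends e ∧
      (∀ u ∈ ends e, ReachAvoiding ends {e' | IsCutEdge ends e'} v u) ∧ 4 ≤ f e := by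
  classical
  by_contra hcon
  push_neg at hcon
  set A : Finset V := univ.filter (fun u => ReachAvoiding ends {e' | IsCutEdge ends e'} v u)
    with hA
  set S : Finset E := univ.filter (fun e => ¬ IsCutEdge ends e ∧
      ∀ w ∈ ends e, ReachAvoiding ends {e' | IsCutEdge ends e'} v w) with hS
  set L : E → Finset ℕ := fun e => if e ∈ S then ({0, 1, 2} : Finset ℕ) else Finset.range (f e)
    with hL
  have hLcard : ∀ e, f e ≤ (L e).card := by
    intro e
    by_cases heS : e ∈ S
    · have := hcon e (mem_filter.mp heS).2.1 (mem_filter.mp heS).2.2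
      simp only [hL, if_pos heS]
      rw [show ({0,1,2} : Finset ℕ).card = 3 by rfl]
      omega
    · simp [hL, if_neg heS]
  obtain ⟨c, hcprop, hcL⟩ := hch L hLcard
  obtain ⟨x₀, ⟨hx₀r, hx₀2⟩, huniq⟩ := exists_unique_deg2 hcubic hone v
  have hfb : ∀ u : V, ReachAvoiding ends {e | IsCutEdge ends e} v u →
      S.filter (fun e => u ∈ ends e) = univ.filter (fun e => ¬ IsCutEdge ends e ∧ u ∈ ends e) :=
    fun u hu => filter_block_edges hu
  refine core ends A S ?_ ?_ x₀ ?_ ?_ ?_ c hcprop ?_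
  · exact fun e he => hloop e
  · intro e he u hu
    rw [hS, mem_filter] at he
    rw [hA, mem_filter]
    exact ⟨mem_univ _, he.2.2 u hu⟩
  · rw [hA, mem_filter]; exact ⟨mem_univ _, hx₀r⟩
  · rw [hfb x₀ hx₀r, ← ncard_filter_eq]
    exact hx₀2
  · intro u huA hne
    rw [hA, mem_filter] at huA
    rw [hfb u huA.2, ← ncard_filter_eq]
    rcases blockdeg_eq hcubic hone u with ⟨h3, -⟩ | ⟨h2, -⟩
    · exact h3
    · exact absurd (huniq u ⟨huA.2, h2⟩) hne
  · intro e heS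
    have := hcL e
    rw [hL] at this
    simp only [if_pos heS] at this
    simp only [Finset.mem_insert, Finset.mem_singleton] at this
    omega

end Choose

lemma part_i (ends : E → Sym2 V) (hloop : Loopless ends) (_hconn : ConnectedG ends)
    (hdeg : ∃ v₀ : V, deg ends v₀ = 2 ∧ ∀ v : V, v ≠ v₀ → deg ends v = 3) :
    ¬ ∃ c : E → ℕ, ProperEdgeColoring ends c ∧ ∀ e, c e < 3 := by
  rintro ⟨c, hcprop, hlt⟩
  obtain ⟨v₀, hd2, hd3⟩ := hdeg
  exact core ends univ univ (fun e _ => hloop e) (fun _ _ u _ => mem_univ u)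
    v₀ (mem_univ v₀) hd2 (fun u _ hne => hd3 u hne) c hcprop (fun e _ => hlt e)

section Final
variable {ends : E → Sym2 V}

lemma final_count
    (hone : ∀ v : V, {e : E | IsCutEdge ends e ∧
      ∃ u ∈ ends e, ReachAvoiding ends ∅ v u}.ncard = 1)
    (hloop : Loopless ends)
    (f : E → ℕ)
    (hbig : ∀ v : V, ∃ e : E, ¬ IsCutEdge ends e ∧
      (∀ u ∈ ends e, ReachAvoiding ends {e' | IsCutEdge ends e'} v u) ∧ 4 ≤ f e) :
    2 * {e : E | IsCutEdge ends e}.ncard ≤ {e : E | 4 ≤ f e}.ncard := by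
  classical
  rw [← card_F hloop, ← Nat.card_coe_set_eq]
  set g : {p : V × E // IsCutEdge ends p.2 ∧ p.1 ∈ ends p.2} → {e : E // 4 ≤ f e} :=
    fun p => ⟨(hbig p.1.1).choose, (hbig p.1.1).choose_spec.2.2⟩ with hg
  have hginj : Function.Injective g := by
    rintro ⟨⟨x, e⟩, hp⟩ ⟨⟨x', e'⟩, hp'⟩ hgeq
    simp only [hg, Subtype.mk.injEq] at hgeq
    obtain ⟨hnc, hall, -⟩ := (hbig x).choose_spec
    obtain ⟨hnc', hall', -⟩ := (hbig x').choose_spec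
    rw [hgeq] at hall
    have ha : ((hbig x').choose |> ends).out.1 ∈ ends (hbig x').choose := Sym2.out_fst_mem _
    have hr : ReachAvoiding ends {e'' | IsCutEdge ends e''} x x' :=
      (hall _ ha).trans (reach_symm (hall' _ ha))
    obtain ⟨rfl, rfl⟩ := flag_eq hone hp.1 hp.2 hp'.1 hp'.2 hr
    rfl
  exact Nat.card_le_card_of_injective g hginj

end Final
end FLLAux


open FLL

/-- Let `G` be a loopless cubic graph with `b ≥ 1` cut-edges in which
every connected component contains exactly one cut-edge; its leaf blocks are the
connected components of `G` minus its cut-edges (there are exactly `2b` of them and each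
has every vertex of degree `3` except exactly one vertex of degree `2`).  Then:
(i) a connected loopless graph in which every vertex has degree `3` except exactly one
vertex of degree `2` admits no proper 3-edge colouring; and
(ii) if `G` is `f`-edge choosable then every leaf block of `G` contains an edge `e` with
`f(e) ≥ 4`; consequently at least `2b` edges `e` have `f(e) ≥ 4`. -/
theorem statement19 :
    -- (i)
    (∀ (V E : Type) [Fintype V] [DecidableEq V] [Fintype E] [DecidableEq E]
        (ends : E → Sym2 V), Loopless ends → ConnectedG ends →
      (∃ v₀ : V, deg ends v₀ = 2 ∧ ∀ v : V, v ≠ v₀ → deg ends v = 3) →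
      ¬ ∃ c : E → ℕ, ProperEdgeColoring ends c ∧ ∀ e, c e < 3) ∧
    -- (ii)
    (∀ (V E : Type) [Fintype V] [DecidableEq V] [Fintype E] [DecidableEq E]
        (ends : E → Sym2 V), Loopless ends → (∀ v, deg ends v = 3) →
      ∀ b : ℕ, b = {e : E | IsCutEdge ends e}.ncard → 1 ≤ b →
      -- every connected component of G contains exactly one cut-edge
      (∀ v : V, {e : E | IsCutEdge ends e ∧
          ∃ u ∈ ends e, ReachAvoiding ends ∅ v u}.ncard = 1) →
      -- there are exactly 2b leaf blocks
      (Nat.card (Quot (fun u v : V =>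
          ∃ e, ¬ IsCutEdge ends e ∧ ends e = s(u, v))) = 2 * b) ∧
      -- each leaf block has all degrees 3 except exactly one vertex of degree 2
      (∀ v₀ : V,
        (∃! u : V, ReachAvoiding ends {e | IsCutEdge ends e} v₀ u ∧
          {e : E | ¬ IsCutEdge ends e ∧ u ∈ ends e}.ncard = 2) ∧
        (∀ u : V, ReachAvoiding ends {e | IsCutEdge ends e} v₀ u →
          {e : E | ¬ IsCutEdge ends e ∧ u ∈ ends e}.ncard = 3 ∨
          {e : E | ¬ IsCutEdge ends e ∧ u ∈ ends e}.ncard = 2)) ∧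
      -- (ii) proper: each leaf block carries an edge of weight ≥ 4, hence ≥ 2b of them
      (∀ f : E → ℕ, EdgeChoosable ends f →
        (∀ v : V, ∃ e : E, ¬ IsCutEdge ends e ∧
          (∀ u ∈ ends e, ReachAvoiding ends {e' | IsCutEdge ends e'} v u) ∧ 4 ≤ f e) ∧
        2 * b ≤ {e : E | 4 ≤ f e}.ncard)) := by
  constructor
  · intro V E _ _ _ _ ends hloop hconn hdeg
    exact FLLAux.part_i ends hloop hconn hdeg
  · intro V E _ _ _ _ ends hloop hcubic b hb hb1 hone
    refine ⟨?_, ?_, ?_⟩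
    · rw [hb]
      exact FLLAux.count_blocks hloop hone
    · intro v₀
      refine ⟨FLLAux.exists_unique_deg2 hcubic hone v₀, fun u _ => ?_⟩
      rcases FLLAux.blockdeg_eq hcubic hone u with ⟨h3, -⟩ | ⟨h2, -⟩
      · exact Or.inl h3
      · exact Or.inr h2
    · intro f hch
      have hbig := fun v => FLLAux.block_has_big_edge hloop hcubic hone f hch v
      refine ⟨hbig, ?_⟩
      rw [hb]
      exact FLLAux.final_count hone hloop f hbig
end
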